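/- arXiv:2006.04871 — 12 statements merged into one kernel-verified Lean document; each statement's English description precedes it below -/
import Mathlib

section
/- For every measurable set A ⊆ X, the set A' := {x' ∈ X' : u'(x') > 0}, where u' is the Radon–Nikodym derivative of the image measure (λ restricted to A) ∘ T⁻¹ with respect to λ', is measurable and satisfies: for every measurable C' ⊆ X', λ'(A' ∩ C') > 0 if and only if λ(A ∩ T⁻¹C') > 0. Moreover, any two measurable sets A', B' ⊆ X' with this property satisfy λ'(A' △ B') = 0. -/
open MeasureTheory Set

/-! Since `(λ|_A) ∘ T⁻¹ ≪ λ'` has density `u'`, the measure `λ(A ∩ T⁻¹C')` is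
`∫_{C'} u' dλ'`, which is positive exactly when `{u' > 0} ∩ C'` is not `λ'`-null.
For uniqueness, test the property with `C' = A' \ B'`: it would make
`λ'(B' ∩ (A' \ B')) = λ'(∅)` positive unless `λ'(A' \ B') = 0`. -/

namespace MeasureTheory.Measure

variable {α : Type*} [MeasurableSpace α] {μ ν : Measure α}

theorem measurableSet_rnDeriv_pos (μ ν : Measure α) : MeasurableSet {x | 0 < μ.rnDeriv ν x} :=
  measurableSet_lt measurable_const (μ.measurable_rnDeriv ν)

theorem measure_rnDeriv_pos_inter_pos_iff [HaveLebesgueDecomposition μ ν] (hμν : μ ≪ ν)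
    {s : Set α} (hs : MeasurableSet s) :
    0 < ν ({x | 0 < μ.rnDeriv ν x} ∩ s) ↔ 0 < μ s := by
  have hsupport : Function.support (μ.rnDeriv ν) = {x | 0 < μ.rnDeriv ν x} := by
    ext x
    simp [pos_iff_ne_zero]
  rw [← setLIntegral_rnDeriv' hμν hs, setLIntegral_pos_iff (μ.measurable_rnDeriv ν), hsupport]

theorem measure_diff_eq_zero_of_forall_measure_inter_pos {s t : Set α} (hs : MeasurableSet s)
    (ht : MeasurableSet t) (h : ∀ u, MeasurableSet u → 0 < ν (s ∩ u) → 0 < ν (t ∩ u)) :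
    ν (s \ t) = 0 := by
  by_contra hne
  have hpos := h (s \ t) (hs.diff ht) <| by
    rwa [inter_eq_self_of_subset_right sdiff_subset, pos_iff_ne_zero]
  simp at hpos

theorem ae_eq_of_forall_measure_inter_pos_iff {s t : Set α} (hs : MeasurableSet s)
    (ht : MeasurableSet t) (h : ∀ u, MeasurableSet u → (0 < ν (s ∩ u) ↔ 0 < ν (t ∩ u))) :
    s =ᵐ[ν] t :=
  ae_eq_set.2
    ⟨measure_diff_eq_zero_of_forall_measure_inter_pos hs ht fun u hu => (h u hu).1,
      measure_diff_eq_zero_of_forall_measure_inter_pos ht hs fun u hu => (h u hu).2⟩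

end MeasureTheory.Measure

theorem stmt_0_general {X X' : Type*} [MeasurableSpace X] [MeasurableSpace X']
    (lam : Measure X) (lam' : Measure X') [SigmaFinite lam] [SigmaFinite lam']
    (T : X → X') (hT : Measurable T) (hnp : lam.map T ≪ lam')
    (A : Set X) :
    (MeasurableSet {x' | 0 < ((lam.restrict A).map T).rnDeriv lam' x'} ∧
      ∀ C' : Set X', MeasurableSet C' →
        (0 < lam' ({x' | 0 < ((lam.restrict A).map T).rnDeriv lam' x'} ∩ C') ↔
          0 < lam (A ∩ T ⁻¹' C'))) ∧
    (∀ A' B' : Set X', MeasurableSet A' → MeasurableSet B' →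
      (∀ C' : Set X', MeasurableSet C' →
        (0 < lam' (A' ∩ C') ↔ 0 < lam (A ∩ T ⁻¹' C'))) →
      (∀ C' : Set X', MeasurableSet C' →
        (0 < lam' (B' ∩ C') ↔ 0 < lam (A ∩ T ⁻¹' C'))) →
      lam' (symmDiff A' B') = 0) := by
  set μ := (lam.restrict A).map T
  have hμ : μ ≪ lam' := (Measure.restrict_le_self.absolutelyContinuous.map hT).trans hnp
  have hμ_apply (C' : Set X') (hC' : MeasurableSet C') : μ C' = lam (A ∩ T ⁻¹' C') := by
    rw [Measure.map_apply hT hC', Measure.restrict_apply (hT hC'), inter_comm]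
  refine ⟨⟨Measure.measurableSet_rnDeriv_pos μ lam', fun C' hC' => ?_⟩,
    fun A' B' hA' hB' hA'_char hB'_char => ?_⟩
  · rw [Measure.measure_rnDeriv_pos_inter_pos_iff hμ hC', hμ_apply C' hC']
  · exact measure_symmDiff_eq_zero_iff.2 <| Measure.ae_eq_of_forall_measure_inter_pos_iff hA' hB'
      fun C' hC' => (hA'_char C' hC').trans (hB'_char C' hC').symm

/-- For a null-preserving measurable map `T` between σ-finite measure
spaces and a measurable set `A`, the set `{u' > 0}`, where `u'` is the Radon–Nikodym
derivative of `(λ|_A) ∘ T⁻¹` with respect to `λ'`, is measurable and is characterized by: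
`λ'(A' ∩ C') > 0 ↔ λ(A ∩ T⁻¹C') > 0` for all measurable `C'`; moreover any two measurable
sets with this property agree up to `λ'`-null sets. -/
theorem stmt_0 {X X' : Type*} [MeasurableSpace X] [MeasurableSpace X']
    (lam : Measure X) (lam' : Measure X') [SigmaFinite lam] [SigmaFinite lam']
    (T : X → X') (hT : Measurable T) (hnp : lam.map T ≪ lam')
    (A : Set X) (hA : MeasurableSet A) :
    (MeasurableSet {x' | 0 < ((lam.restrict A).map T).rnDeriv lam' x'} ∧
      ∀ C' : Set X', MeasurableSet C' →
        (0 < lam' ({x' | 0 < ((lam.restrict A).map T).rnDeriv lam' x'} ∩ C') ↔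
          0 < lam (A ∩ T ⁻¹' C'))) ∧
    (∀ A' B' : Set X', MeasurableSet A' → MeasurableSet B' →
      (∀ C' : Set X', MeasurableSet C' →
        (0 < lam' (A' ∩ C') ↔ 0 < lam (A ∩ T ⁻¹' C'))) →
      (∀ C' : Set X', MeasurableSet C' →
        (0 < lam' (B' ∩ C') ↔ 0 < lam (A ∩ T ⁻¹' C'))) →
      lam' (symmDiff A' B') = 0) :=
  stmt_0_general lam lam' T hT hnp A
end

section
/- For all measurable A, B ⊆ X and measurable A', B' ⊆ X': (1) there exists a measurable M' ⊆ X' such that A ⊆̇ T⁻¹M' and B ⊆̇ X \ T⁻¹M' if and only if λ'(T̂A ∩ T̂B) = 0; (2) T⁻¹A' ⊆̇ T⁻¹B' if and only if T̂X ∩ A' ⊆̇ T̂X ∩ B'. -/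
open MeasureTheory Set

/-- (1) Two measurable sets `A, B ⊆ X` can be separated by a preimage
(`A ⊆̇ T⁻¹M'` and `B ⊆̇ X \ T⁻¹M'` for some measurable `M'`) iff `λ'(T̂A ∩ T̂B) = 0`.
(2) `T⁻¹A' ⊆̇ T⁻¹B'` iff `T̂X ∩ A' ⊆̇ T̂X ∩ B'`. -/
theorem stmt_3 {X X' : Type*} [MeasurableSpace X] [MeasurableSpace X']
    (lam : Measure X) (lam' : Measure X') [SigmaFinite lam] [SigmaFinite lam']
    (T : X → X') (hT : Measurable T) (hnp : lam.map T ≪ lam')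
    (hatT : Set X → Set X')
    (hm : ∀ A : Set X, MeasurableSet A → MeasurableSet (hatT A))
    (hchar : ∀ A : Set X, MeasurableSet A → ∀ C' : Set X', MeasurableSet C' →
      (0 < lam' (hatT A ∩ C') ↔ 0 < lam (A ∩ T ⁻¹' C')))
    (A B : Set X) (hA : MeasurableSet A) (hB : MeasurableSet B)
    (A' B' : Set X') (hA' : MeasurableSet A') (hB' : MeasurableSet B') :
    ((∃ M' : Set X', MeasurableSet M' ∧
        lam (A \ T ⁻¹' M') = 0 ∧ lam (B \ (T ⁻¹' M')ᶜ) = 0) ↔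
      lam' (hatT A ∩ hatT B) = 0) ∧
    (lam (T ⁻¹' A' \ T ⁻¹' B') = 0 ↔
      lam' ((hatT Set.univ ∩ A') \ (hatT Set.univ ∩ B')) = 0) := by
  have key : ∀ A : Set X, MeasurableSet A → ∀ C' : Set X', MeasurableSet C' →
      (lam' (hatT A ∩ C') = 0 ↔ lam (A ∩ T ⁻¹' C') = 0) := by
    intro A hA C' hC'
    have h := not_iff_not.mpr (hchar A hA C' hC')
    simpa [pos_iff_ne_zero, not_not] using h
  constructor
  · constructor
    · rintro ⟨M', hM', h1, h2⟩
      have hAM : lam' (hatT A ∩ M'ᶜ) = 0 :=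
        (key A hA M'ᶜ hM'.compl).mpr (by rwa [preimage_compl, ← diff_eq])
      have hBM : lam' (hatT B ∩ M') = 0 :=
        (key B hB M' hM').mpr (by rwa [diff_compl] at h2)
      have hsub : hatT A ∩ hatT B ⊆ (hatT A ∩ M'ᶜ) ∪ (hatT B ∩ M') := by
        rintro x ⟨hx1, hx2⟩
        by_cases hx : x ∈ M'
        · exact Or.inr ⟨hx2, hx⟩
        · exact Or.inl ⟨hx1, hx⟩
      exact measure_mono_null hsub (measure_union_null hAM hBM)
    · intro h
      refine ⟨hatT A \ hatT B, (hm A hA).diff (hm B hB), ?_, ?_⟩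
      · rw [diff_eq, ← preimage_compl]
        refine (key A hA _ ((hm A hA).diff (hm B hB)).compl).mp ?_
        refine measure_mono_null (fun x hx => ?_) h
        obtain ⟨hx1, hx2⟩ := hx
        simp only [mem_compl_iff, mem_diff, not_and, not_not] at hx2
        exact ⟨hx1, hx2 hx1⟩
      · rw [diff_compl]
        refine (key B hB _ ((hm A hA).diff (hm B hB))).mp ?_
        refine measure_mono_null (fun x hx => ?_) h
        obtain ⟨hx1, hx2, hx3⟩ := hx
        exact absurd hx1 hx3
  · have h2 := key univ MeasurableSet.univ (A' \ B') (hA'.diff hB')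
    rw [show (hatT univ ∩ A') \ (hatT univ ∩ B') = hatT univ ∩ (A' \ B') by
          ext x; simp only [mem_diff, mem_inter_iff, not_and]; tauto,
        show T ⁻¹' A' \ T ⁻¹' B' = univ ∩ T ⁻¹' (A' \ B') by
          simp [preimage_diff]]
    exact h2.symm
end

section
/- Let A ⊆ X be measurable. (1) If A' ⊆ X' is measurable with T(A) ⊆ A' (set-theoretic image), then T̂A ⊆̇ A'; in particular, if T(A) is measurable then T̂A ⊆̇ T(A). (2) If T(A) is measurable, then there exists a measurable set A₀ ⊆ A with λ(A \ A₀) = 0 such that T(A₀) is measurable and T̂A =̇ T(A₀) (up to λ'-null sets). -/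
open MeasureTheory Set

/-- The characterizing property of the essential image `T̂A`, stated for a candidate set `S`. -/
def IsEssImage {X X' : Type*} [MeasurableSpace X] [MeasurableSpace X'] (lam : Measure X)
    (lam' : Measure X') (T : X → X') (A : Set X) (S : Set X') : Prop :=
  ∀ C' : Set X', MeasurableSet C' → (0 < lam' (S ∩ C') ↔ 0 < lam (A ∩ T ⁻¹' C'))

namespace IsEssImage

variable {X X' : Type*} [MeasurableSpace X] [MeasurableSpace X'] {lam : Measure X}
  {lam' : Measure X'} {T : X → X'} {A : Set X} {S : Set X'}

theorem measure_diff_eq_zero_of_image_subset (hS : IsEssImage lam lam' T A S) {A' : Set X'}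
    (hA' : MeasurableSet A') (hsub : T '' A ⊆ A') : lam' (S \ A') = 0 := by
  have hdisj : A ∩ T ⁻¹' A'ᶜ = ∅ := by
    rw [preimage_compl, ← sdiff_eq, sdiff_eq_empty]
    exact image_subset_iff.mp hsub
  by_contra hne
  have hpos := (hS A'ᶜ hA'.compl).mp (by rw [← sdiff_eq]; exact pos_iff_ne_zero.mpr hne)
  rw [hdisj, measure_empty] at hpos
  exact lt_irrefl 0 hpos

theorem measure_diff_preimage_eq_zero (hS : IsEssImage lam lam' T A S) (hSm : MeasurableSet S) :
    lam (A \ T ⁻¹' S) = 0 := by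
  have hnpos := (hS Sᶜ hSm.compl).not.mp (by simp)
  rwa [not_lt, nonpos_iff_eq_zero, preimage_compl, ← sdiff_eq] at hnpos

theorem exists_subset_image_ae_eq (hS : IsEssImage lam lam' T A S) (hT : Measurable T)
    (hA : MeasurableSet A) (hSm : MeasurableSet S) (hTA : MeasurableSet (T '' A)) :
    ∃ A₀ : Set X, MeasurableSet A₀ ∧ A₀ ⊆ A ∧ lam (A \ A₀) = 0 ∧
      MeasurableSet (T '' A₀) ∧ lam' (symmDiff S (T '' A₀)) = 0 := by
  -- `A ∩ T ⁻¹' S` loses only a null part of `A`, and its image is `T '' A ∩ S`.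
  have himage : T '' (A ∩ T ⁻¹' S) = T '' A ∩ S := image_inter_preimage T A S
  refine ⟨A ∩ T ⁻¹' S, hA.inter (hT hSm), inter_subset_left, ?_, himage ▸ hTA.inter hSm, ?_⟩
  · rw [sdiff_self_inter]
    exact hS.measure_diff_preimage_eq_zero hSm
  · rw [himage, symmDiff_of_ge inter_subset_right, sdiff_inter_self_eq_sdiff]
    exact hS.measure_diff_eq_zero_of_image_subset hTA Subset.rfl

end IsEssImage

theorem stmt_6_general {X X' : Type*} [MeasurableSpace X] [MeasurableSpace X']
    (lam : Measure X) (lam' : Measure X')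
    (T : X → X') (hT : Measurable T)
    (hatT : Set X → Set X')
    (hm : ∀ A : Set X, MeasurableSet A → MeasurableSet (hatT A))
    (hchar : ∀ A : Set X, MeasurableSet A → ∀ C' : Set X', MeasurableSet C' →
      (0 < lam' (hatT A ∩ C') ↔ 0 < lam (A ∩ T ⁻¹' C')))
    (A : Set X) (hA : MeasurableSet A) :
    (∀ A' : Set X', MeasurableSet A' → T '' A ⊆ A' → lam' (hatT A \ A') = 0) ∧
    (MeasurableSet (T '' A) → lam' (hatT A \ T '' A) = 0) ∧
    (MeasurableSet (T '' A) →
      ∃ A₀ : Set X, MeasurableSet A₀ ∧ A₀ ⊆ A ∧ lam (A \ A₀) = 0 ∧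
        MeasurableSet (T '' A₀) ∧ lam' (symmDiff (hatT A) (T '' A₀)) = 0) := by
  have hess : IsEssImage lam lam' T A (hatT A) := hchar A hA
  exact ⟨fun _ hA' hsub => hess.measure_diff_eq_zero_of_image_subset hA' hsub,
    fun hTA => hess.measure_diff_eq_zero_of_image_subset hTA Subset.rfl,
    fun hTA => hess.exists_subset_image_ae_eq hT hA (hm A hA) hTA⟩

/-- (1) If `T(A) ⊆ A'` with `A'` measurable, then `T̂A ⊆̇ A'`; in particular
if `T(A)` is measurable then `T̂A ⊆̇ T(A)`. (2) If `T(A)` is measurable then there is a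
measurable `A₀ ⊆ A` with `λ(A \ A₀) = 0`, `T(A₀)` measurable, and `T̂A =̇ T(A₀)`. -/
theorem stmt_6 {X X' : Type*} [MeasurableSpace X] [MeasurableSpace X']
    (lam : Measure X) (lam' : Measure X') [SigmaFinite lam] [SigmaFinite lam']
    (T : X → X') (hT : Measurable T) (hnp : lam.map T ≪ lam')
    (hatT : Set X → Set X')
    (hm : ∀ A : Set X, MeasurableSet A → MeasurableSet (hatT A))
    (hchar : ∀ A : Set X, MeasurableSet A → ∀ C' : Set X', MeasurableSet C' →
      (0 < lam' (hatT A ∩ C') ↔ 0 < lam (A ∩ T ⁻¹' C')))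
    (A : Set X) (hA : MeasurableSet A) :
    (∀ A' : Set X', MeasurableSet A' → T '' A ⊆ A' → lam' (hatT A \ A') = 0) ∧
    (MeasurableSet (T '' A) → lam' (hatT A \ T '' A) = 0) ∧
    (MeasurableSet (T '' A) →
      ∃ A₀ : Set X, MeasurableSet A₀ ∧ A₀ ⊆ A ∧ lam (A \ A₀) = 0 ∧
        MeasurableSet (T '' A₀) ∧ lam' (symmDiff (hatT A) (T '' A₀)) = 0) :=
  stmt_6_general lam lam' T hT hatT hm hchar A hA
end

section
/- Suppose T has measurable images (the set-theoretic image T(A) is measurable for every measurable A ⊆ X) and has no ambitious null-sets (λ(A) = 0 implies λ'(T(A)) = 0 for every measurable A ⊆ X). Then for every measurable A ⊆ X the essential image coincides with the set-theoretic image up to λ'-null sets: T̂A =̇ T(A). -/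
open MeasureTheory Set

/-!
Both halves of `T̂A =̇ T(A)` come from testing the characterization of `T̂A` on the
difference sets. On `T̂A \ T(A)` the set `A ∩ T⁻¹(C')` is empty, so `T̂A ⊆̇ T(A)`. On
`C' = T(A) \ T̂A` it is `A ∩ T⁻¹(C')` that is null; since `C' ⊆ T(A ∩ T⁻¹(C'))`, a measurable
null hull of that set has an image covering `C'`, which is then null because `T` has no
ambitious null-sets.
-/

section

variable {X X' : Type*} [MeasurableSpace X] [MeasurableSpace X']
  {μ : Measure X} {μ' : Measure X'} {T : X → X'} {A : Set X} {E : Set X'}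

lemma measure_diff_image_eq_zero_of_pos_imp (hTA : MeasurableSet (T '' A))
    (h : ∀ C', MeasurableSet C' → 0 < μ' (E ∩ C') → 0 < μ (A ∩ T ⁻¹' C')) :
    μ' (E \ T '' A) = 0 := by
  by_contra hne
  have hempty : A ∩ T ⁻¹' (T '' A)ᶜ = ∅ :=
    eq_empty_of_forall_notMem fun x ⟨hx, hxc⟩ => hxc (mem_image_of_mem T hx)
  have hpos := h _ hTA.compl (pos_iff_ne_zero.mpr hne)
  rw [hempty, measure_empty] at hpos
  exact hpos.false

lemma measure_image_diff_eq_zero_of_pos_imp (hE : MeasurableSet E)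
    (hTA : MeasurableSet (T '' A))
    (hna : ∀ S, MeasurableSet S → μ S = 0 → μ' (T '' S) = 0)
    (h : ∀ C', MeasurableSet C' → 0 < μ (A ∩ T ⁻¹' C') → 0 < μ' (E ∩ C')) :
    μ' (T '' A \ E) = 0 := by
  set C' := T '' A \ E
  have hnull : μ (A ∩ T ⁻¹' C') = 0 := by
    by_contra hne
    have hdisj : E ∩ C' = ∅ := by simp [C']
    simpa [hdisj] using h C' (hTA.diff hE) (pos_iff_ne_zero.mpr hne)
  have hcover : C' ⊆ T '' toMeasurable μ (A ∩ T ⁻¹' C') := by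
    rintro y hy
    obtain ⟨x, hx, rfl⟩ := hy.1
    exact mem_image_of_mem T (subset_toMeasurable μ _ ⟨hx, hy⟩)
  exact measure_mono_null hcover
    (hna _ (measurableSet_toMeasurable μ _) (by rwa [measure_toMeasurable]))

end

theorem stmt_7_general {X X' : Type*} [MeasurableSpace X] [MeasurableSpace X']
    (lam : Measure X) (lam' : Measure X')
    (T : X → X')
    (hatT : Set X → Set X')
    (hm : ∀ A : Set X, MeasurableSet A → MeasurableSet (hatT A))
    (hchar : ∀ A : Set X, MeasurableSet A → ∀ C' : Set X', MeasurableSet C' →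
      (0 < lam' (hatT A ∩ C') ↔ 0 < lam (A ∩ T ⁻¹' C')))
    (hmi : ∀ A : Set X, MeasurableSet A → MeasurableSet (T '' A))
    (hna : ∀ A : Set X, MeasurableSet A → lam A = 0 → lam' (T '' A) = 0) :
    ∀ A : Set X, MeasurableSet A → lam' (symmDiff (hatT A) (T '' A)) = 0 := by
  intro A hA
  refine measure_symmDiff_eq_zero_iff.mpr (ae_eq_set.mpr ⟨?_, ?_⟩)
  · exact measure_diff_image_eq_zero_of_pos_imp (hmi A hA)
      fun C' hC' => (hchar A hA C' hC').mp
  · exact measure_image_diff_eq_zero_of_pos_imp (hm A hA) (hmi A hA) hna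
      fun C' hC' => (hchar A hA C' hC').mpr

/-- If `T` has measurable images and no ambitious null-sets, then the
essential image coincides with the set-theoretic image up to `λ'`-null sets:
`T̂A =̇ T(A)` for every measurable `A`. -/
theorem stmt_7 {X X' : Type*} [MeasurableSpace X] [MeasurableSpace X']
    (lam : Measure X) (lam' : Measure X') [SigmaFinite lam] [SigmaFinite lam']
    (T : X → X') (hT : Measurable T) (hnp : lam.map T ≪ lam')
    (hatT : Set X → Set X')
    (hm : ∀ A : Set X, MeasurableSet A → MeasurableSet (hatT A))
    (hchar : ∀ A : Set X, MeasurableSet A → ∀ C' : Set X', MeasurableSet C' →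
      (0 < lam' (hatT A ∩ C') ↔ 0 < lam (A ∩ T ⁻¹' C')))
    (hmi : ∀ A : Set X, MeasurableSet A → MeasurableSet (T '' A))
    (hna : ∀ A : Set X, MeasurableSet A → lam A = 0 → lam' (T '' A) = 0) :
    ∀ A : Set X, MeasurableSet A → lam' (symmDiff (hatT A) (T '' A)) = 0 :=
  stmt_7_general lam lam' T hatT hm hchar hmi hna
end

section
/- Suppose T is piecewise invertible: there is a countable family (Xⱼ)_{j∈J} of pairwise disjoint measurable subsets of X with λ(X \ ⋃ⱼ Xⱼ) = 0 such that for each j the restriction of T to Xⱼ is injective and maps every measurable subset of Xⱼ to a measurable subset of X'. Then there exists a measurable set Y ⊆ X with λ(X \ Y) = 0 such that T restricted to Y has measurable images (T(A) is measurable for every measurable A ⊆ Y) and no ambitious null-sets (every measurable A ⊆ Y with λ(A) = 0 satisfies λ'(T(A)) = 0). -/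
/-!
On a piece `E` where `T` is injective with measurable images, `s ↦ λ' (T '' (s ∩ E))` is a
measure: the pull-back of `λ'` along `T ∘ (↑) : E → X'`, pushed forward to `X` along the
inclusion. It is s-finite because `λ'` is, so it has a Lebesgue decomposition with respect to
`λ`; off the `λ`-null set carrying its singular part it is absolutely continuous with respect
to `λ`, i.e. `T` maps `λ`-null subsets of `E` to `λ'`-null sets. Removing these null sets from
every piece gives `Y`.
-/

open MeasureTheory Measure Set

namespace MeasureTheory.Measure

variable {α β : Type*} [MeasurableSpace α] [MeasurableSpace β]

instance isFiniteMeasure_comap (f : α → β) (ν : Measure β) [IsFiniteMeasure ν] :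
    IsFiniteMeasure (ν.comap f) :=
  ⟨(comap_apply_le f ν MeasurableSet.univ.nullMeasurableSet).trans_lt (measure_lt_top ν _)⟩

theorem comap_sum {ι : Type*} {f : α → β} (hf : Function.Injective f)
    (hfm : ∀ s, MeasurableSet s → MeasurableSet (f '' s)) (ν : ι → Measure β) :
    (sum ν).comap f = sum fun i ↦ (ν i).comap f := by
  ext s hs
  simp only [comap_apply f hf hfm _ hs, sum_apply _ hs, sum_apply _ (hfm s hs)]

theorem sFinite_comap {f : α → β} (hf : Function.Injective f)
    (hfm : ∀ s, MeasurableSet s → MeasurableSet (f '' s)) (ν : Measure β) [SFinite ν] :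
    SFinite (ν.comap f) := by
  rw [← sum_sfiniteSeq ν, comap_sum hf hfm]
  infer_instance

theorem exists_measure_compl_eq_zero_restrict_absolutelyContinuous (μ ν : Measure α)
    [SFinite μ] [SigmaFinite ν] :
    ∃ S, MeasurableSet S ∧ ν Sᶜ = 0 ∧ μ.restrict S ≪ ν := by
  obtain ⟨S, hS, hsing, hνS⟩ := mutuallySingular_singularPart μ ν
  refine ⟨S, hS, hνS, ?_⟩
  rw [haveLebesgueDecomposition_add μ ν, restrict_add, restrict_eq_zero.2 hsing, zero_add]
  exact (absolutelyContinuous_of_le restrict_le_self).trans (withDensity_absolutelyContinuous _ _)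

end MeasureTheory.Measure

theorem exists_measure_compl_eq_zero_measure_image_eq_zero_of_injOn {X X' : Type*}
    [MeasurableSpace X] [MeasurableSpace X'] (lam : Measure X) (lam' : Measure X')
    [SigmaFinite lam] [SFinite lam'] {T : X → X'} {E : Set X} (hE : MeasurableSet E)
    (hinj : InjOn T E) (himg : ∀ A ⊆ E, MeasurableSet A → MeasurableSet (T '' A)) :
    ∃ S, MeasurableSet S ∧ lam Sᶜ = 0 ∧
      ∀ A ⊆ E ∩ S, MeasurableSet A → lam A = 0 → lam' (T '' A) = 0 := by
  set f : E → X' := T ∘ (↑) with hf_def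
  have hf : Function.Injective f := hinj.injective
  have hfm : ∀ t, MeasurableSet t → MeasurableSet (f '' t) := fun t ht ↦ by
    rw [hf_def, image_comp]
    exact himg _ (Subtype.coe_image_subset E t) (hE.subtype_image ht)
  have := sFinite_comap hf hfm lam'
  set μ := (lam'.comap f).map ((↑) : E → X)
  obtain ⟨S, hS, hSc, hac⟩ := exists_measure_compl_eq_zero_restrict_absolutelyContinuous μ lam
  refine ⟨S, hS, hSc, fun A hA hAm hA0 ↦ ?_⟩
  have hAE : ((↑) : E → X) '' ((↑) ⁻¹' A) = A := by
    simpa using hA.trans inter_subset_left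
  calc lam' (T '' A) = lam' (f '' ((↑) ⁻¹' A)) := by rw [hf_def, image_comp, hAE]
    _ = μ A := by
      rw [map_apply measurable_subtype_coe hAm,
        comap_apply f hf hfm _ (measurable_subtype_coe hAm)]
    _ = μ.restrict S A := by
      rw [restrict_apply hAm, inter_eq_left.2 (hA.trans inter_subset_right)]
    _ = 0 := hac hA0

theorem stmt_8_general {X X' : Type*} [MeasurableSpace X] [MeasurableSpace X']
    (lam : Measure X) (lam' : Measure X') [SigmaFinite lam] [SigmaFinite lam']
    (T : X → X')
    (J : Type*) [Countable J] (Xj : J → Set X)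
    (hXjm : ∀ j, MeasurableSet (Xj j))
    (hcov : lam (⋃ j, Xj j)ᶜ = 0)
    (hinj : ∀ j, Set.InjOn T (Xj j))
    (himg : ∀ j, ∀ A : Set X, A ⊆ Xj j → MeasurableSet A → MeasurableSet (T '' A)) :
    ∃ Y : Set X, MeasurableSet Y ∧ lam Yᶜ = 0 ∧
      (∀ A : Set X, A ⊆ Y → MeasurableSet A → MeasurableSet (T '' A)) ∧
      (∀ A : Set X, A ⊆ Y → MeasurableSet A → lam A = 0 → lam' (T '' A) = 0) := by
  choose S hSm hSc hnull using fun j ↦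
    exists_measure_compl_eq_zero_measure_image_eq_zero_of_injOn lam lam' (hXjm j) (hinj j)
      (himg j)
  have hYm (j : J) : MeasurableSet (Xj j ∩ S j) := (hXjm j).inter (hSm j)
  have himage {A : Set X} (hA : A ⊆ ⋃ j, Xj j ∩ S j) :
      T '' A = ⋃ j, T '' (A ∩ (Xj j ∩ S j)) := by
    rw [← image_iUnion, ← inter_iUnion, inter_eq_left.2 hA]
  refine ⟨⋃ j, Xj j ∩ S j, .iUnion hYm, ?_, fun A hA hAm ↦ ?_, fun A hA hAm hA0 ↦ ?_⟩
  · have hcompl : (⋃ j, Xj j ∩ S j)ᶜ ⊆ (⋃ j, Xj j)ᶜ ∪ ⋃ j, (S j)ᶜ := by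
      rw [← compl_iInter, ← compl_inter, compl_subset_compl]
      rintro x ⟨hx, hxS⟩
      obtain ⟨j, hj⟩ := mem_iUnion.1 hx
      exact mem_iUnion.2 ⟨j, hj, mem_iInter.1 hxS j⟩
    exact measure_mono_null hcompl (measure_union_null hcov (measure_iUnion_null hSc))
  · rw [himage hA]
    exact .iUnion fun j ↦
      himg j _ (inter_subset_right.trans inter_subset_left) (hAm.inter (hYm j))
  · rw [himage hA]
    exact measure_iUnion_null fun j ↦ hnull j _ inter_subset_right (hAm.inter (hYm j))
      (measure_mono_null inter_subset_left hA0)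

/-- If `T` is piecewise invertible (a countable measurable partition mod λ
on whose pieces `T` is injective with measurable images), then there is a full-measure
measurable set `Y` such that `T` restricted to `Y` has measurable images and no ambitious
null-sets. -/
theorem stmt_8 {X X' : Type*} [MeasurableSpace X] [MeasurableSpace X']
    (lam : Measure X) (lam' : Measure X') [SigmaFinite lam] [SigmaFinite lam']
    (T : X → X') (hT : Measurable T) (hnp : lam.map T ≪ lam')
    (J : Type*) [Countable J] (Xj : J → Set X)
    (hXjm : ∀ j, MeasurableSet (Xj j))
    (hdisj : Pairwise (Function.onFun Disjoint Xj))
    (hcov : lam (⋃ j, Xj j)ᶜ = 0)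
    (hinj : ∀ j, Set.InjOn T (Xj j))
    (himg : ∀ j, ∀ A : Set X, A ⊆ Xj j → MeasurableSet A → MeasurableSet (T '' A)) :
    ∃ Y : Set X, MeasurableSet Y ∧ lam Yᶜ = 0 ∧
      (∀ A : Set X, A ⊆ Y → MeasurableSet A → MeasurableSet (T '' A)) ∧
      (∀ A : Set X, A ⊆ Y → MeasurableSet A → lam A = 0 → lam' (T '' A) = 0) :=
  stmt_8_general lam lam' T J Xj hXjm hcov hinj himg
end

section
/- Suppose Ť assigns to every measurable set A ⊆ X a measurable set Ť(A) ⊆ X' such that for all measurable A, B ⊆ X and measurable B' ⊆ X': (1) λ(A) > 0 if and only if λ'(Ť(A)) > 0; (2) A ⊆̇ B implies Ť(A) ⊆̇ Ť(B); (3) Ť(T⁻¹B') ⊆̇ B'. Then Ť(A) =̇ T̂A (up to λ'-null sets) for every measurable A ⊆ X. -/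
open MeasureTheory Set

/-- The essential image operation is characterized axiomatically: any map
`Ť` from measurable sets to measurable sets which preserves positivity and null sets,
is monotone mod null sets, and satisfies `Ť(T⁻¹B') ⊆̇ B'`, coincides with `T̂` mod `λ'`. -/
theorem stmt_9 {X X' : Type*} [MeasurableSpace X] [MeasurableSpace X']
    (lam : Measure X) (lam' : Measure X') [SigmaFinite lam] [SigmaFinite lam']
    (T : X → X') (hT : Measurable T) (hnp : lam.map T ≪ lam')
    (hatT : Set X → Set X')
    (hm : ∀ A : Set X, MeasurableSet A → MeasurableSet (hatT A))
    (hchar : ∀ A : Set X, MeasurableSet A → ∀ C' : Set X', MeasurableSet C' →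
      (0 < lam' (hatT A ∩ C') ↔ 0 < lam (A ∩ T ⁻¹' C')))
    (checkT : Set X → Set X')
    (hcm : ∀ A : Set X, MeasurableSet A → MeasurableSet (checkT A))
    (hc1 : ∀ A : Set X, MeasurableSet A → (0 < lam A ↔ 0 < lam' (checkT A)))
    (hc2 : ∀ A B : Set X, MeasurableSet A → MeasurableSet B →
      lam (A \ B) = 0 → lam' (checkT A \ checkT B) = 0)
    (hc3 : ∀ B' : Set X', MeasurableSet B' → lam' (checkT (T ⁻¹' B') \ B') = 0) :
    ∀ A : Set X, MeasurableSet A → lam' (symmDiff (checkT A) (hatT A)) = 0 := by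
  intro A hA
  -- Part 1: checkT A \ hatT A is null
  have h1 : lam (A ∩ T ⁻¹' (hatT A)ᶜ) = 0 := by
    by_contra h
    have hp := (hchar A hA (hatT A)ᶜ (hm A hA).compl).2 (pos_iff_ne_zero.mpr h)
    simp at hp
  have hAsub : lam (A \ T ⁻¹' (hatT A)) = 0 := by
    simpa [Set.diff_eq, Set.preimage_compl] using h1
  have hstep : lam' (checkT A \ checkT (T ⁻¹' (hatT A))) = 0 :=
    hc2 A _ hA (hT (hm A hA)) hAsub
  have hstep2 : lam' (checkT (T ⁻¹' (hatT A)) \ hatT A) = 0 := hc3 _ (hm A hA)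
  have part1 : lam' (checkT A \ hatT A) = 0 := by
    have hsub : checkT A \ hatT A ⊆
        (checkT A \ checkT (T ⁻¹' (hatT A))) ∪ (checkT (T ⁻¹' (hatT A)) \ hatT A) := by
      intro x hx
      by_cases hxc : x ∈ checkT (T ⁻¹' (hatT A))
      · exact Or.inr ⟨hxc, hx.2⟩
      · exact Or.inl ⟨hx.1, hxc⟩
    exact measure_mono_null hsub (measure_union_null hstep hstep2)
  -- Part 2: hatT A \ checkT A is null
  have h2 : lam (A ∩ T ⁻¹' (checkT A)ᶜ) = 0 := by
    by_contra h
    set A0 := A ∩ T ⁻¹' (checkT A)ᶜ with hA0def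
    have hA0 : MeasurableSet A0 := hA.inter (hT (hcm A hA).compl)
    have hpos : 0 < lam' (checkT A0) := (hc1 A0 hA0).1 (pos_iff_ne_zero.mpr h)
    have hs1 : lam' (checkT A0 \ checkT A) = 0 := by
      apply hc2 A0 A hA0 hA
      rw [Set.diff_eq_empty.mpr Set.inter_subset_left]; exact measure_empty
    have hs2 : lam' (checkT A0 \ checkT (T ⁻¹' (checkT A)ᶜ)) = 0 := by
      apply hc2 A0 _ hA0 (hT (hcm A hA).compl)
      rw [Set.diff_eq_empty.mpr Set.inter_subset_right]; exact measure_empty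
    have hs3 : lam' (checkT (T ⁻¹' (checkT A)ᶜ) \ (checkT A)ᶜ) = 0 :=
      hc3 _ (hcm A hA).compl
    have hs4 : lam' (checkT A0 \ (checkT A)ᶜ) = 0 := by
      have hsub : checkT A0 \ (checkT A)ᶜ ⊆
          (checkT A0 \ checkT (T ⁻¹' (checkT A)ᶜ)) ∪
            (checkT (T ⁻¹' (checkT A)ᶜ) \ (checkT A)ᶜ) := by
        intro x hx
        by_cases hxc : x ∈ checkT (T ⁻¹' (checkT A)ᶜ)
        · exact Or.inr ⟨hxc, hx.2⟩
        · exact Or.inl ⟨hx.1, hxc⟩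
      exact measure_mono_null hsub (measure_union_null hs2 hs3)
    have : lam' (checkT A0) = 0 := by
      have hsub : checkT A0 ⊆ (checkT A0 \ checkT A) ∪ (checkT A0 \ (checkT A)ᶜ) := by
        intro x hx
        by_cases hxc : x ∈ checkT A
        · exact Or.inr ⟨hx, fun hc => hc hxc⟩
        · exact Or.inl ⟨hx, hxc⟩
      exact measure_mono_null hsub (measure_union_null hs1 hs4)
    exact absurd this (pos_iff_ne_zero.mp hpos)
  have part2 : lam' (hatT A \ checkT A) = 0 := by
    have := hchar A hA (checkT A)ᶜ (hcm A hA).compl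
    have h0 : ¬ 0 < lam' (hatT A ∩ (checkT A)ᶜ) := fun hp => by
      exact (pos_iff_ne_zero.mp (this.mp hp)) h2
    simpa [Set.diff_eq] using (not_lt.mp h0 : lam' (hatT A ∩ (checkT A)ᶜ) ≤ 0)
  rw [Set.symmDiff_def]
  exact measure_union_null part1 part2
end

section
/- For every measurable A ⊆ X: (1) A is forward invariant (A ⊆̇ T⁻¹A) if and only if T̂A ⊆̇ A; (2) consequently, A is invariant (A =̇ T⁻¹A) if and only if T̂A ⊆̇ A and T̂(X \ A) ⊆̇ X \ A. -/
open MeasureTheory Set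

/-- For a null-preserving self-map `T` with essential image `T̂`:
(1) `A` is forward invariant (`A ⊆̇ T⁻¹A`) iff `T̂A ⊆̇ A`;
(2) `A` is invariant (`A =̇ T⁻¹A`) iff `T̂A ⊆̇ A` and `T̂(Aᶜ) ⊆̇ Aᶜ`. -/
theorem stmt_10 {X : Type*} [MeasurableSpace X]
    (lam : Measure X) [SigmaFinite lam]
    (T : X → X) (hT : Measurable T) (hnp : lam.map T ≪ lam)
    (hatT : Set X → Set X)
    (hm : ∀ A : Set X, MeasurableSet A → MeasurableSet (hatT A))
    (hchar : ∀ A : Set X, MeasurableSet A → ∀ C : Set X, MeasurableSet C →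
      (0 < lam (hatT A ∩ C) ↔ 0 < lam (A ∩ T ⁻¹' C)))
    (A : Set X) (hA : MeasurableSet A) :
    (lam (A \ T ⁻¹' A) = 0 ↔ lam (hatT A \ A) = 0) ∧
    (lam (symmDiff A (T ⁻¹' A)) = 0 ↔
      (lam (hatT A \ A) = 0 ∧ lam (hatT Aᶜ \ Aᶜ) = 0)) := by
  have key : ∀ B : Set X, MeasurableSet B →
      (lam (B \ T ⁻¹' B) = 0 ↔ lam (hatT B \ B) = 0) := by
    intro B hB
    have h := hchar B hB Bᶜ hB.compl
    rw [show hatT B ∩ Bᶜ = hatT B \ B from rfl,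
        show B ∩ T ⁻¹' Bᶜ = B \ T ⁻¹' B from rfl] at h
    simp only [pos_iff_ne_zero] at h
    exact not_iff_not.mp h.symm
  refine ⟨key A hA, ?_⟩
  have hc : Aᶜ \ T ⁻¹' Aᶜ = T ⁻¹' A \ A := by
    ext x; simp [Set.diff_eq, and_comm]
  rw [Set.symmDiff_def, measure_union_null_iff,
      ← key A hA, ← key Aᶜ hA.compl, hc]
end

section
/- For every measurable A ⊆ X: (1) the set A→ := ⋃_{m≥0} T̂^m A is a forward invariant measurable set (A→ ⊆̇ T⁻¹A→) containing A, and it is minimal in the sense that every forward invariant measurable H with A ⊆̇ H satisfies A→ ⊆̇ H; (2) the set A↻ := ⋃_{n≥0} T⁻ⁿ(⋃_{m≥0} T̂^m A) is an invariant measurable set (A↻ =̇ T⁻¹A↻) containing A, and every invariant measurable H with A ⊆̇ H satisfies A↻ ⊆̇ H. -/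
open MeasureTheory Set

/-- (1) `A→ = ⋃_{m≥0} T̂^m A` is the forward invariant hull of `A`:
it is measurable, forward invariant, contains `A` mod λ, and is contained mod λ in every
forward invariant measurable set containing `A` mod λ.
(2) `A↻ = ⋃_{n≥0} T⁻ⁿ A→` is the invariant hull of `A`. -/
theorem stmt_11 {X : Type*} [MeasurableSpace X]
    (lam : Measure X) [SigmaFinite lam]
    (T : X → X) (hT : Measurable T) (hnp : lam.map T ≪ lam)
    (hatT : Set X → Set X)
    (hm : ∀ A : Set X, MeasurableSet A → MeasurableSet (hatT A))
    (hchar : ∀ A : Set X, MeasurableSet A → ∀ C : Set X, MeasurableSet C →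
      (0 < lam (hatT A ∩ C) ↔ 0 < lam (A ∩ T ⁻¹' C)))
    (A : Set X) (hA : MeasurableSet A) :
    (MeasurableSet (⋃ m : ℕ, hatT^[m] A) ∧
      lam ((⋃ m : ℕ, hatT^[m] A) \ T ⁻¹' (⋃ m : ℕ, hatT^[m] A)) = 0 ∧
      lam (A \ ⋃ m : ℕ, hatT^[m] A) = 0 ∧
      (∀ H : Set X, MeasurableSet H → lam (H \ T ⁻¹' H) = 0 → lam (A \ H) = 0 →
        lam ((⋃ m : ℕ, hatT^[m] A) \ H) = 0)) ∧
    (MeasurableSet (⋃ n : ℕ, T^[n] ⁻¹' (⋃ m : ℕ, hatT^[m] A)) ∧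
      lam (symmDiff (⋃ n : ℕ, T^[n] ⁻¹' (⋃ m : ℕ, hatT^[m] A))
        (T ⁻¹' (⋃ n : ℕ, T^[n] ⁻¹' (⋃ m : ℕ, hatT^[m] A)))) = 0 ∧
      lam (A \ ⋃ n : ℕ, T^[n] ⁻¹' (⋃ m : ℕ, hatT^[m] A)) = 0 ∧
      (∀ H : Set X, MeasurableSet H → lam (symmDiff H (T ⁻¹' H)) = 0 →
        lam (A \ H) = 0 →
        lam ((⋃ n : ℕ, T^[n] ⁻¹' (⋃ m : ℕ, hatT^[m] A)) \ H) = 0)) := by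

  classical
  have tri : ∀ s t u : Set X, s \ u ⊆ (s \ t) ∪ (t \ u) := by
    intro s t u x hx
    by_cases h : x ∈ t
    · exact Or.inr ⟨h, hx.2⟩
    · exact Or.inl ⟨hx.1, h⟩
  have hmeas : ∀ m : ℕ, MeasurableSet (hatT^[m] A) := by
    intro m
    induction m with
    | zero => simpa using hA
    | succ n ih => rw [Function.iterate_succ_apply']; exact hm _ ih
  set U : Set X := ⋃ m : ℕ, hatT^[m] A with hUdef
  have hUm : MeasurableSet U := MeasurableSet.iUnion fun m => hmeas m
  have hkey : ∀ B : Set X, MeasurableSet B → ∀ C : Set X, MeasurableSet C →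
      (lam (hatT B \ C) = 0 ↔ lam (B \ T ⁻¹' C) = 0) := by
    intro B hB C hC
    have h := hchar B hB Cᶜ hC.compl
    have h1 : hatT B ∩ Cᶜ = hatT B \ C := (Set.diff_eq _ _).symm
    have h2 : B ∩ T ⁻¹' Cᶜ = B \ T ⁻¹' C := by
      rw [Set.preimage_compl]; exact (Set.diff_eq _ _).symm
    rw [h1, h2] at h
    simp only [pos_iff_ne_zero] at h
    exact not_iff_not.mp h
  have hAU : A ⊆ U := by
    have : hatT^[0] A ⊆ U := subset_iUnion (fun m => hatT^[m] A) 0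
    simpa using this
  have step1 : ∀ m, lam (hatT^[m] A \ T ⁻¹' U) = 0 := by
    intro m
    have h0 : lam (hatT (hatT^[m] A) \ hatT^[m + 1] A) = 0 := by
      rw [Function.iterate_succ_apply']; simp
    have h1 := (hkey _ (hmeas m) _ (hmeas (m + 1))).mp h0
    refine measure_mono_null ?_ h1
    exact diff_subset_diff_right (preimage_mono (subset_iUnion (fun m => hatT^[m] A) (m + 1)))
  have hFwd : lam (U \ T ⁻¹' U) = 0 := by
    have hEq : U \ T ⁻¹' U = ⋃ m, (hatT^[m] A \ T ⁻¹' U) := by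
      rw [hUdef, iUnion_diff]
    rw [hEq]
    exact measure_iUnion_null step1
  have hMin1 : ∀ H : Set X, MeasurableSet H → lam (H \ T ⁻¹' H) = 0 → lam (A \ H) = 0 →
      lam (U \ H) = 0 := by
    intro H hH hHf hAH
    have hstep : ∀ m, lam (hatT^[m] A \ H) = 0 := by
      intro m
      induction m with
      | zero => simpa using hAH
      | succ n ih =>
        have h1 : lam (hatT^[n] A \ T ⁻¹' H) = 0 :=
          measure_mono_null (tri _ H _) (measure_union_null ih hHf)
        rw [Function.iterate_succ_apply']
        exact (hkey _ (hmeas n) H hH).mpr h1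
    have hEq : U \ H = ⋃ m, (hatT^[m] A \ H) := by rw [hUdef, iUnion_diff]
    rw [hEq]
    exact measure_iUnion_null hstep
  refine ⟨⟨hUm, hFwd, by rw [Set.diff_eq_empty.mpr hAU]; exact measure_empty, hMin1⟩, ?_⟩
  have hTn : ∀ n, Measurable (T^[n]) := fun n => hT.iterate n
  set V : Set X := ⋃ n : ℕ, T^[n] ⁻¹' U with hVdef
  have hVm : MeasurableSet V := MeasurableSet.iUnion fun n => hTn n hUm
  have hsucc : ∀ n : ℕ, T^[n + 1] ⁻¹' U = T ⁻¹' (T^[n] ⁻¹' U) := by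
    intro n
    rw [Function.iterate_succ, Set.preimage_comp]
  have hTV : T ⁻¹' V ⊆ V := by
    rw [hVdef, preimage_iUnion]
    refine iUnion_subset fun n => ?_
    rw [← hsucc]
    exact subset_iUnion (fun k => T^[k] ⁻¹' U) (n + 1)
  have hAV : A ⊆ V := by
    have : T^[0] ⁻¹' U ⊆ V := subset_iUnion (fun k => T^[k] ⁻¹' U) 0
    simp only [Function.iterate_zero, Set.preimage_id] at this
    exact fun x hx => this (hAU hx)
  have hUV : U ⊆ V := by
    have : T^[0] ⁻¹' U ⊆ V := subset_iUnion (fun k => T^[k] ⁻¹' U) 0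
    simpa using this
  have hVsub : V \ T ⁻¹' V ⊆ U \ T ⁻¹' U := by
    intro x hx
    obtain ⟨hxV, hxnV⟩ := hx
    rw [hVdef, mem_iUnion] at hxV
    obtain ⟨n, hn⟩ := hxV
    cases n with
    | zero =>
      simp only [Function.iterate_zero, Set.preimage_id] at hn
      exact ⟨hn, fun hc => hxnV (preimage_mono hUV hc)⟩
    | succ k =>
      rw [hsucc k] at hn
      exact absurd (preimage_mono (subset_iUnion (fun j => T^[j] ⁻¹' U) k) hn) hxnV
  have hVfwd : lam (V \ T ⁻¹' V) = 0 := measure_mono_null hVsub hFwd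
  have hVsymm : lam (symmDiff V (T ⁻¹' V)) = 0 := by
    rw [Set.symmDiff_def]
    refine measure_union_null hVfwd ?_
    rw [Set.diff_eq_empty.mpr hTV]
    exact measure_empty
  have hnull : ∀ S : Set X, MeasurableSet S → lam S = 0 → ∀ n, lam (T^[n] ⁻¹' S) = 0 := by
    intro S hS h0 n
    induction n with
    | zero => simpa using h0
    | succ k ih =>
      rw [Function.iterate_succ, Set.preimage_comp]
      rw [← Measure.map_apply hT (hTn k hS)]
      exact hnp ih
  refine ⟨hVm, hVsymm, by rw [Set.diff_eq_empty.mpr hAV]; exact measure_empty, ?_⟩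
  intro H hH hHs hAH
  have hHf : lam (H \ T ⁻¹' H) = 0 := by
    refine measure_mono_null ?_ hHs
    rw [Set.symmDiff_def]
    exact subset_union_left
  have hback : lam (T ⁻¹' H \ H) = 0 := by
    refine measure_mono_null ?_ hHs
    rw [Set.symmDiff_def]
    exact subset_union_right
  have hUH : lam (U \ H) = 0 := hMin1 H hH hHf hAH
  have hHn : ∀ n, lam (T^[n] ⁻¹' H \ H) = 0 := by
    intro n
    induction n with
    | zero => simp
    | succ k ih =>
      have h1 : T^[k + 1] ⁻¹' H \ T^[k] ⁻¹' H = T^[k] ⁻¹' (T ⁻¹' H \ H) := by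
        rw [Function.iterate_succ', Set.preimage_comp, Set.preimage_diff]
      refine measure_mono_null (tri _ (T^[k] ⁻¹' H) _) (measure_union_null ?_ ih)
      rw [h1]
      exact hnull _ ((hT hH).diff hH) hback k
  have hfin : ∀ n, lam (T^[n] ⁻¹' U \ H) = 0 := by
    intro n
    have h1 : lam (T^[n] ⁻¹' U \ T^[n] ⁻¹' H) = 0 := by
      rw [← Set.preimage_diff]
      exact hnull (U \ H) (hUm.diff hH) hUH n
    exact measure_mono_null (tri _ (T^[n] ⁻¹' H) _) (measure_union_null h1 (hHn n))
  rw [iUnion_diff]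
  exact measure_iUnion_null hfin
end

section
/- For every measurable A ⊆ X: A is a nonsingular set for T, meaning that A is forward invariant (A ⊆̇ T⁻¹A) and for every measurable C ⊆ X one has λ(A ∩ C) > 0 if and only if λ(A ∩ T⁻¹(A ∩ C)) > 0, if and only if T̂A =̇ A. In particular, T is nonsingular (λ ∘ T⁻¹ and λ are mutually absolutely continuous) if and only if T̂X =̇ X. -/
open MeasureTheory Set

/-- A measurable `A` is a nonsingular set for `T` (forward invariant, and
`λ(A ∩ C) > 0 ↔ λ(A ∩ T⁻¹(A ∩ C)) > 0` for all measurable `C`) iff `T̂A =̇ A`.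
In particular, `T` is nonsingular (`λ ∘ T⁻¹ ≃ λ`) iff `T̂X =̇ X`. -/
theorem stmt_12 {X : Type*} [MeasurableSpace X]
    (lam : Measure X) [SigmaFinite lam]
    (T : X → X) (hT : Measurable T) (hnp : lam.map T ≪ lam)
    (hatT : Set X → Set X)
    (hm : ∀ A : Set X, MeasurableSet A → MeasurableSet (hatT A))
    (hchar : ∀ A : Set X, MeasurableSet A → ∀ C : Set X, MeasurableSet C →
      (0 < lam (hatT A ∩ C) ↔ 0 < lam (A ∩ T ⁻¹' C))) :
    (∀ A : Set X, MeasurableSet A →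
      ((lam (A \ T ⁻¹' A) = 0 ∧
        ∀ C : Set X, MeasurableSet C →
          (0 < lam (A ∩ C) ↔ 0 < lam (A ∩ T ⁻¹' (A ∩ C)))) ↔
        lam (symmDiff (hatT A) A) = 0)) ∧
    ((lam.map T ≪ lam ∧ lam ≪ lam.map T) ↔
      lam (symmDiff (hatT Set.univ) Set.univ) = 0) := by
  have key : ∀ A : Set X, MeasurableSet A → ∀ C : Set X, MeasurableSet C →
      (lam (hatT A ∩ C) = 0 ↔ lam (A ∩ T ⁻¹' C) = 0) := by
    intro A hA C hC
    have h := not_iff_not.mpr (hchar A hA C hC)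
    simpa [pos_iff_ne_zero, not_not] using h
  constructor
  · intro A hA
    have hsd : lam (symmDiff (hatT A) A) = 0 ↔
        lam (hatT A \ A) = 0 ∧ lam (A \ hatT A) = 0 := by
      rw [Set.symmDiff_def, measure_union_null_iff]
    constructor
    · rintro ⟨hfi, hcond⟩
      rw [hsd]
      constructor
      · -- λ(T̂A \ A) = 0 : use C = Aᶜ, forward invariance
        have h1 : lam (A ∩ T ⁻¹' Aᶜ) = 0 := by
          simpa [Set.diff_eq, Set.preimage_compl] using hfi
        have := (key A hA Aᶜ hA.compl).mpr h1
        simpa [Set.diff_eq] using this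
      · -- λ(A \ T̂A) = 0 : use C = (T̂A)ᶜ in the condition
        have hC : MeasurableSet (A ∩ (hatT A)ᶜ) := hA.inter (hm A hA).compl
        have h0 : lam (hatT A ∩ (A ∩ (hatT A)ᶜ)) = 0 := by
          have : hatT A ∩ (A ∩ (hatT A)ᶜ) = ∅ := by
            ext x; simp; tauto
          simp [this]
        have h1 : lam (A ∩ T ⁻¹' (A ∩ (hatT A)ᶜ)) = 0 :=
          (key A hA _ hC).mp h0
        have h2 := not_iff_not.mpr (hcond ((hatT A)ᶜ) (hm A hA).compl)
        simp only [pos_iff_ne_zero, not_not] at h2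
        have := h2.mpr h1
        simpa [Set.diff_eq] using this
    · intro hnull
      rw [hsd] at hnull
      obtain ⟨h1, h2⟩ := hnull
      constructor
      · -- forward invariance
        have h0 : lam (hatT A ∩ Aᶜ) = 0 := by
          have : hatT A ∩ Aᶜ = hatT A \ A := by rw [Set.diff_eq]
          rw [this]; exact h1
        have := (key A hA Aᶜ hA.compl).mp h0
        simpa [Set.diff_eq, Set.preimage_compl] using this
      · intro C hC
        have hk := key A hA (A ∩ C) (hA.inter hC)
        have hAC : lam (hatT A ∩ (A ∩ C)) = 0 ↔ lam (A ∩ C) = 0 := by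
          constructor
          · intro h
            have hsub : A ∩ C ⊆ (hatT A ∩ (A ∩ C)) ∪ (A \ hatT A) := by
              intro x hx
              by_cases hh : x ∈ hatT A
              · exact Or.inl ⟨hh, hx⟩
              · exact Or.inr ⟨hx.1, hh⟩
            exact measure_mono_null hsub
              (measure_union_null h h2)
          · intro h
            exact measure_mono_null Set.inter_subset_right h
        rw [pos_iff_ne_zero, pos_iff_ne_zero]
        exact not_iff_not.mpr (hAC.symm.trans hk)
  · -- part 2
    have hsd : lam (symmDiff (hatT Set.univ) Set.univ) = 0 ↔
        lam ((hatT Set.univ)ᶜ) = 0 := by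
      have : symmDiff (hatT Set.univ) Set.univ = (hatT Set.univ)ᶜ := by
        rw [Set.symmDiff_def]
        simp [Set.diff_eq]
      rw [this]
    rw [hsd]
    constructor
    · rintro ⟨-, hac⟩
      have hC : MeasurableSet ((hatT Set.univ)ᶜ) := (hm _ MeasurableSet.univ).compl
      have h0 : lam (hatT Set.univ ∩ (hatT Set.univ)ᶜ) = 0 := by simp
      have h1 := (key Set.univ MeasurableSet.univ _ hC).mp h0
      simp only [Set.univ_inter] at h1
      have : lam.map T ((hatT Set.univ)ᶜ) = 0 := by
        rw [Measure.map_apply hT hC]; exact h1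
      exact hac this
    · intro h
      refine ⟨hnp, Measure.AbsolutelyContinuous.mk fun s hs h0 => ?_⟩
      rw [Measure.map_apply hT hs] at h0
      have h1 : lam (hatT Set.univ ∩ s) = 0 :=
        (key Set.univ MeasurableSet.univ s hs).mpr (by simpa using h0)
      have hsub : s ⊆ (hatT Set.univ ∩ s) ∪ (hatT Set.univ)ᶜ := by
        intro x hx
        by_cases hh : x ∈ hatT Set.univ
        · exact Or.inl ⟨hh, hx⟩
        · exact Or.inr hh
      exact measure_mono_null hsub (measure_union_null h1 h)
end

section
/- The following are equivalent: (i) T is conservative, i.e. every wandering set is a null set; (ii) for every measurable A ⊆ X, A ⊆̇ ⋃_{n≥1} T̂ⁿA; (iii) for every measurable A ⊆ X, A ⊆̇ ⋂_{m≥1} ⋃_{n≥m} T̂ⁿA (that is, A ⊆̇ limsup_n T̂ⁿA); (iv) for every measurable A ⊆ X, T̂A ⊆̇ A implies T̂(X \ A) ⊆̇ X \ A. Moreover, if these hold then T is nonsingular (λ ∘ T⁻¹ and λ are mutually absolutely continuous). -/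
open MeasureTheory Set

section Aux

variable {X : Type*} [MeasurableSpace X] {lam : Measure X} {T : X → X}
  {hatT : Set X → Set X}

lemma nullTrans {A B C : Set X} (h1 : lam (A \ B) = 0) (h2 : lam (B \ C) = 0) :
    lam (A \ C) = 0 := by
  refine measure_mono_null ?_ (measure_union_null h1 h2)
  intro x hx
  by_cases hB : x ∈ B
  · exact Or.inr ⟨hB, hx.2⟩
  · exact Or.inl ⟨hx.1, hB⟩

lemma nullOfSubset {A B : Set X} (h : A ⊆ B) : lam (A \ B) = 0 := by
  rw [diff_eq_empty.mpr h]; simp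

variable (hm : ∀ A : Set X, MeasurableSet A → MeasurableSet (hatT A))
  (hchar : ∀ A : Set X, MeasurableSet A → ∀ C : Set X, MeasurableSet C →
      (0 < lam (hatT A ∩ C) ↔ 0 < lam (A ∩ T ⁻¹' C)))

include hchar in
lemma charNull {A C : Set X} (hA : MeasurableSet A) (hC : MeasurableSet C) :
    lam (hatT A ∩ C) = 0 ↔ lam (A ∩ T ⁻¹' C) = 0 :=
  not_iff_not.mp (by simpa [pos_iff_ne_zero] using hchar A hA C hC)

include hchar in
lemma adjNull {A C : Set X} (hA : MeasurableSet A) (hC : MeasurableSet C) :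
    lam (hatT A \ C) = 0 ↔ lam (A \ T ⁻¹' C) = 0 := by
  rw [diff_eq, diff_eq, ← preimage_compl]
  exact charNull hchar hA hC.compl

include hm hchar in
lemma monoNull {A B : Set X} (hA : MeasurableSet A) (hB : MeasurableSet B)
    (h : lam (A \ B) = 0) : lam (hatT A \ hatT B) = 0 := by
  have h1 : lam (B \ T ⁻¹' (hatT B)) = 0 :=
    (adjNull hchar hB (hm B hB)).mp (nullOfSubset subset_rfl)
  exact (adjNull hchar hA (hm B hB)).mpr (nullTrans h h1)

include hm hchar in
lemma unionNull {B : ℕ → Set X} (hB : ∀ n, MeasurableSet (B n)) :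
    lam (hatT (⋃ n, B n) \ ⋃ n, hatT (B n)) = 0 := by
  refine (adjNull hchar (MeasurableSet.iUnion hB)
    (MeasurableSet.iUnion fun n => hm _ (hB n))).mpr ?_
  rw [iUnion_diff]
  refine measure_iUnion_null fun n => ?_
  refine measure_mono_null ?_ ((adjNull hchar (hB n) (hm _ (hB n))).mp (nullOfSubset subset_rfl))
  intro x hx
  exact ⟨hx.1, fun hc => hx.2 (mem_iUnion.mpr ⟨n, hc⟩)⟩

include hm in
lemma itMeas {A : Set X} (hA : MeasurableSet A) (n : ℕ) : MeasurableSet (hatT^[n] A) := by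
  induction n with
  | zero => simpa
  | succ k ih => rw [Function.iterate_succ_apply']; exact hm _ ih

include hm hchar in
lemma itChar (hT : Measurable T) {A : Set X} (hA : MeasurableSet A) (n : ℕ) :
    ∀ C : Set X, MeasurableSet C →
      (0 < lam (hatT^[n] A ∩ C) ↔ 0 < lam (A ∩ T^[n] ⁻¹' C)) := by
  induction n with
  | zero => intro C hC; simp
  | succ k ih =>
    intro C hC
    rw [Function.iterate_succ_apply', Function.iterate_succ', preimage_comp]
    exact (hchar _ (itMeas hm hA k) C hC).trans (ih (T ⁻¹' C) (hT hC))

include hm hchar in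
lemma itCharNull (hT : Measurable T) {A C : Set X} (hA : MeasurableSet A)
    (hC : MeasurableSet C) (n : ℕ) :
    lam (hatT^[n] A ∩ C) = 0 ↔ lam (A ∩ T^[n] ⁻¹' C) = 0 :=
  not_iff_not.mp (by simpa [pos_iff_ne_zero] using itChar hm hchar hT hA n C hC)

include hm hchar in
lemma itMono {A B : Set X} (hA : MeasurableSet A) (hB : MeasurableSet B)
    (h : lam (A \ B) = 0) (n : ℕ) : lam (hatT^[n] A \ hatT^[n] B) = 0 := by
  induction n with
  | zero => simpa
  | succ k ih =>
    rw [Function.iterate_succ_apply', Function.iterate_succ_apply']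
    exact monoNull hm hchar (itMeas hm hA k) (itMeas hm hB k) ih

include hm hchar in
lemma itUnion {B : ℕ → Set X} (hB : ∀ n, MeasurableSet (B n)) (k : ℕ) :
    lam (hatT^[k] (⋃ n, B n) \ ⋃ n, hatT^[k] (B n)) = 0 := by
  induction k with
  | zero => simp
  | succ j ih =>
    have h1 : lam (hatT^[j+1] (⋃ n, B n) \ hatT (⋃ n, hatT^[j] (B n))) = 0 := by
      rw [Function.iterate_succ_apply']
      exact monoNull hm hchar (itMeas hm (MeasurableSet.iUnion hB) j)
        (MeasurableSet.iUnion fun n => itMeas hm (hB n) j) ih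
    have h2 : lam (hatT (⋃ n, hatT^[j] (B n)) \ ⋃ n, hatT^[j+1] (B n)) = 0 := by
      have := unionNull hm hchar (B := fun n => hatT^[j] (B n)) (fun n => itMeas hm (hB n) j)
      simpa [Function.iterate_succ_apply'] using this
    exact nullTrans h1 h2

end Aux

/-- Equivalent characterizations of conservativity via essential images:
(i) every wandering set is null; (ii) `A ⊆̇ ⋃_{n≥1} T̂ⁿA`; (iii) `A ⊆̇ limsup_n T̂ⁿA`;
(iv) `T̂A ⊆̇ A` implies `T̂(Aᶜ) ⊆̇ Aᶜ`. Moreover conservativity implies nonsingularity. -/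
theorem stmt_14 {X : Type*} [MeasurableSpace X]
    (lam : Measure X) [SigmaFinite lam]
    (T : X → X) (hT : Measurable T) (hnp : lam.map T ≪ lam)
    (hatT : Set X → Set X)
    (hm : ∀ A : Set X, MeasurableSet A → MeasurableSet (hatT A))
    (hchar : ∀ A : Set X, MeasurableSet A → ∀ C : Set X, MeasurableSet C →
      (0 < lam (hatT A ∩ C) ↔ 0 < lam (A ∩ T ⁻¹' C))) :
    ((∀ W : Set X, MeasurableSet W →
        (∀ n : ℕ, 1 ≤ n → lam (W ∩ T^[n] ⁻¹' W) = 0) → lam W = 0) ↔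
      (∀ A : Set X, MeasurableSet A → lam (A \ ⋃ n : ℕ, hatT^[n + 1] A) = 0)) ∧
    ((∀ W : Set X, MeasurableSet W →
        (∀ n : ℕ, 1 ≤ n → lam (W ∩ T^[n] ⁻¹' W) = 0) → lam W = 0) ↔
      (∀ A : Set X, MeasurableSet A →
        lam (A \ ⋂ m : ℕ, ⋃ n : ℕ, hatT^[m + 1 + n] A) = 0)) ∧
    ((∀ W : Set X, MeasurableSet W →
        (∀ n : ℕ, 1 ≤ n → lam (W ∩ T^[n] ⁻¹' W) = 0) → lam W = 0) ↔
      (∀ A : Set X, MeasurableSet A →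
        lam (hatT A \ A) = 0 → lam (hatT Aᶜ \ Aᶜ) = 0)) ∧
    ((∀ W : Set X, MeasurableSet W →
        (∀ n : ℕ, 1 ≤ n → lam (W ∩ T^[n] ⁻¹' W) = 0) → lam W = 0) →
      (lam.map T ≪ lam ∧ lam ≪ lam.map T)) := by
  -- (i) → (ii)
  have hC2 : (∀ W : Set X, MeasurableSet W →
      (∀ n : ℕ, 1 ≤ n → lam (W ∩ T^[n] ⁻¹' W) = 0) → lam W = 0) →
      ∀ A : Set X, MeasurableSet A → lam (A \ ⋃ n : ℕ, hatT^[n + 1] A) = 0 := by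
    intro hcons A hA
    have hU : MeasurableSet (⋃ n : ℕ, hatT^[n+1] A) :=
      MeasurableSet.iUnion fun n => itMeas hm hA (n+1)
    have hWm : MeasurableSet (A \ ⋃ n : ℕ, hatT^[n+1] A) := hA.diff hU
    refine hcons _ hWm fun n hn => ?_
    by_contra hcon
    have pos : 0 < lam (hatT^[n] (A \ ⋃ n : ℕ, hatT^[n+1] A) ∩ (A \ ⋃ n : ℕ, hatT^[n+1] A)) :=
      (itChar hm hchar hT hWm n _ hWm).mpr (pos_iff_ne_zero.mpr hcon)
    have hWA : lam ((A \ ⋃ n : ℕ, hatT^[n+1] A) \ A) = 0 := nullOfSubset diff_subset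
    obtain ⟨j, rfl⟩ : ∃ j, n = j + 1 := ⟨n - 1, by omega⟩
    have hz2 : lam (hatT^[j+1] A ∩ (A \ ⋃ n : ℕ, hatT^[n+1] A)) = 0 := by
      refine measure_mono_null (t := (∅ : Set X)) ?_ (by simp)
      intro x hx
      exact absurd (mem_iUnion.mpr ⟨j, hx.1⟩) hx.2.2
    have hz : lam (hatT^[j+1] (A \ ⋃ n : ℕ, hatT^[n+1] A) ∩ (A \ ⋃ n : ℕ, hatT^[n+1] A)) = 0 := by
      refine measure_mono_null ?_ (measure_union_null
        (itMono hm hchar hWm hA hWA (j+1)) hz2)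
      intro x hx
      by_cases hxa : x ∈ hatT^[j+1] A
      · exact Or.inr ⟨hxa, hx.2⟩
      · exact Or.inl ⟨hx.1, hxa⟩
    exact pos.ne' hz
  -- (ii) → (i)
  have h2C : (∀ A : Set X, MeasurableSet A → lam (A \ ⋃ n : ℕ, hatT^[n + 1] A) = 0) →
      ∀ W : Set X, MeasurableSet W →
        (∀ n : ℕ, 1 ≤ n → lam (W ∩ T^[n] ⁻¹' W) = 0) → lam W = 0 := by
    intro hP2 W hW hwand
    have h1 := hP2 W hW
    have h3 : lam (W ∩ ⋃ n : ℕ, hatT^[n+1] W) = 0 := by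
      rw [inter_iUnion]
      refine measure_iUnion_null fun n => ?_
      rw [inter_comm]
      exact (itCharNull hm hchar hT hW hW (n+1)).mpr (hwand (n+1) (by omega))
    refine measure_mono_null ?_ (measure_union_null h1 h3)
    intro x hx
    by_cases hxu : x ∈ ⋃ n : ℕ, hatT^[n+1] W
    · exact Or.inr ⟨hx, hxu⟩
    · exact Or.inl ⟨hx, hxu⟩
  -- (ii) → (iii)
  have h23 : (∀ A : Set X, MeasurableSet A → lam (A \ ⋃ n : ℕ, hatT^[n + 1] A) = 0) →
      ∀ A : Set X, MeasurableSet A →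
        lam (A \ ⋂ m : ℕ, ⋃ n : ℕ, hatT^[m + 1 + n] A) = 0 := by
    intro hP2 A hA
    have key : ∀ m : ℕ, lam (A \ ⋃ n : ℕ, hatT^[m + 1 + n] A) = 0 := by
      intro m
      induction m with
      | zero =>
        refine nullTrans (hP2 A hA) (nullOfSubset (iUnion_subset fun n => ?_))
        intro x hx
        exact mem_iUnion.mpr ⟨n, by rw [show (0:ℕ)+1+n = n+1 from by omega]; exact hx⟩
      | succ m ih =>
        have hBm : MeasurableSet (⋃ n : ℕ, hatT^[m+1+n] A) :=
          MeasurableSet.iUnion fun n => itMeas hm hA _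
        have h2 := hP2 _ hBm
        have h3 : ∀ k : ℕ, lam (hatT^[k+1] (⋃ n : ℕ, hatT^[m+1+n] A)
            \ ⋃ n : ℕ, hatT^[m+1+1+n] A) = 0 := by
          intro k
          refine nullTrans (itUnion hm hchar (fun n => itMeas hm hA _) (k+1))
            (nullOfSubset (iUnion_subset fun n => ?_))
          rw [← Function.iterate_add_apply]
          intro x hx
          exact mem_iUnion.mpr ⟨k + n,
            by rw [show m+1+1+(k+n) = k+1+(m+1+n) from by omega]; exact hx⟩
        have h4 : lam ((⋃ n : ℕ, hatT^[m+1+n] A) \ ⋃ n : ℕ, hatT^[m+1+1+n] A) = 0 :=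
          nullTrans h2 (by rw [iUnion_diff]; exact measure_iUnion_null h3)
        exact nullTrans ih h4
    rw [diff_iInter]
    exact measure_iUnion_null key
  -- (iii) → (ii)
  have h32 : (∀ A : Set X, MeasurableSet A →
        lam (A \ ⋂ m : ℕ, ⋃ n : ℕ, hatT^[m + 1 + n] A) = 0) →
      ∀ A : Set X, MeasurableSet A → lam (A \ ⋃ n : ℕ, hatT^[n + 1] A) = 0 := by
    intro hP3 A hA
    refine measure_mono_null ?_ (hP3 A hA)
    intro x hx
    refine ⟨hx.1, fun hc => hx.2 ?_⟩
    obtain ⟨n, hn⟩ := mem_iUnion.mp (mem_iInter.mp hc 0)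
    exact mem_iUnion.mpr ⟨n, by rw [show n+1 = 0+1+n from by omega]; exact hn⟩
  -- (i) → (iv)
  have hC4 : (∀ W : Set X, MeasurableSet W →
      (∀ n : ℕ, 1 ≤ n → lam (W ∩ T^[n] ⁻¹' W) = 0) → lam W = 0) →
      ∀ A : Set X, MeasurableSet A →
        lam (hatT A \ A) = 0 → lam (hatT Aᶜ \ Aᶜ) = 0 := by
    intro hcons A hA hTA
    have hWm : MeasurableSet (Aᶜ ∩ T ⁻¹' A) := hA.compl.inter (hT hA)
    have hgoal : lam (Aᶜ ∩ T ⁻¹' A) = 0 := by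
      have hP2 := hC2 hcons _ hWm
      have hsub : ∀ n : ℕ, lam (hatT^[n+1] (Aᶜ ∩ T ⁻¹' A) \ A) = 0 := by
        intro n
        induction n with
        | zero =>
          show lam (hatT (Aᶜ ∩ T ⁻¹' A) \ A) = 0
          exact (adjNull hchar hWm hA).mpr (nullOfSubset inter_subset_right)
        | succ k ih =>
          have h1 : lam (hatT^[k+1+1] (Aᶜ ∩ T ⁻¹' A) \ hatT A) = 0 := by
            rw [Function.iterate_succ_apply']
            exact monoNull hm hchar (itMeas hm hWm (k+1)) hA ih
          exact nullTrans h1 hTA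
      have h2 : lam ((Aᶜ ∩ T ⁻¹' A) ∩ ⋃ n : ℕ, hatT^[n+1] (Aᶜ ∩ T ⁻¹' A)) = 0 := by
        rw [inter_iUnion]
        refine measure_iUnion_null fun n => ?_
        refine measure_mono_null ?_ (hsub n)
        intro x hx
        exact ⟨hx.2, hx.1.1⟩
      refine measure_mono_null ?_ (measure_union_null hP2 h2)
      intro x hx
      by_cases hxu : x ∈ ⋃ n : ℕ, hatT^[n+1] (Aᶜ ∩ T ⁻¹' A)
      · exact Or.inr ⟨hx, hxu⟩
      · exact Or.inl ⟨hx, hxu⟩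
    have hfin := (charNull hchar hA.compl hA).mpr hgoal
    simpa [diff_eq, compl_compl] using hfin
  -- (iv) → (i)
  have h4C : (∀ A : Set X, MeasurableSet A →
        lam (hatT A \ A) = 0 → lam (hatT Aᶜ \ Aᶜ) = 0) →
      ∀ W : Set X, MeasurableSet W →
        (∀ n : ℕ, 1 ≤ n → lam (W ∩ T^[n] ⁻¹' W) = 0) → lam W = 0 := by
    intro hP4 W hW hwand
    have hB : MeasurableSet (⋃ n : ℕ, hatT^[n+1] W) :=
      MeasurableSet.iUnion fun n => itMeas hm hW _
    have hTB : lam (hatT (⋃ n : ℕ, hatT^[n+1] W) \ ⋃ n : ℕ, hatT^[n+1] W) = 0 := by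
      refine nullTrans (unionNull hm hchar fun n => itMeas hm hW (n+1))
        (nullOfSubset (iUnion_subset fun n => ?_))
      intro x hx
      exact mem_iUnion.mpr ⟨n+1, by rw [Function.iterate_succ_apply']; exact hx⟩
    have h4 := hP4 _ hB hTB
    have hWB : lam (W \ (⋃ n : ℕ, hatT^[n+1] W)ᶜ) = 0 := by
      rw [diff_compl, inter_iUnion]
      refine measure_iUnion_null fun n => ?_
      rw [inter_comm]
      exact (itCharNull hm hchar hT hW hW (n+1)).mpr (hwand (n+1) (by omega))
    have h5 : lam (hatT W \ hatT (⋃ n : ℕ, hatT^[n+1] W)ᶜ) = 0 :=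
      monoNull hm hchar hW hB.compl hWB
    have h6 : lam (hatT W) = 0 := by
      have hsubB : hatT W ⊆ ⋃ n : ℕ, hatT^[n+1] W := fun x hx => mem_iUnion.mpr ⟨0, hx⟩
      have hcap : lam (hatT (⋃ n : ℕ, hatT^[n+1] W)ᶜ ∩ ⋃ n : ℕ, hatT^[n+1] W) = 0 := by
        simpa [diff_eq, compl_compl] using h4
      refine measure_mono_null ?_ (measure_union_null h5 hcap)
      intro x hx
      by_cases hxc : x ∈ hatT (⋃ n : ℕ, hatT^[n+1] W)ᶜ
      · exact Or.inr ⟨hxc, hsubB hx⟩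
      · exact Or.inl ⟨hx, hxc⟩
    have h7 : lam (hatT W ∩ univ) = 0 := by rw [inter_univ]; exact h6
    have h8 := (charNull hchar hW MeasurableSet.univ).mp h7
    simpa using h8
  -- nonsingular
  have hNS : (∀ W : Set X, MeasurableSet W →
      (∀ n : ℕ, 1 ≤ n → lam (W ∩ T^[n] ⁻¹' W) = 0) → lam W = 0) →
      lam ≪ lam.map T := by
    intro hcons
    refine Measure.AbsolutelyContinuous.mk fun S hS hS0 => ?_
    have hpre : lam (T ⁻¹' S) = 0 := by rwa [Measure.map_apply hT hS] at hS0
    have hSX : lam (hatT univ ∩ S) = 0 :=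
      (charNull hchar MeasurableSet.univ hS).mpr (by simpa using hpre)
    have hP2 := hC2 hcons S hS
    have hsub : ∀ n : ℕ, lam (hatT^[n+1] S \ hatT univ) = 0 := fun n => by
      rw [Function.iterate_succ_apply']
      exact monoNull hm hchar (itMeas hm hS n) MeasurableSet.univ (nullOfSubset (subset_univ _))
    have h2 : lam (S ∩ ⋃ n : ℕ, hatT^[n+1] S) = 0 := by
      rw [inter_iUnion]
      refine measure_iUnion_null fun n => ?_
      refine measure_mono_null ?_ (measure_union_null (hsub n) hSX)
      intro x hx
      by_cases hxu : x ∈ hatT univ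
      · exact Or.inr ⟨hxu, hx.1⟩
      · exact Or.inl ⟨hx.2, hxu⟩
    refine measure_mono_null ?_ (measure_union_null hP2 h2)
    intro x hx
    by_cases hxu : x ∈ ⋃ n : ℕ, hatT^[n+1] S
    · exact Or.inr ⟨hx, hxu⟩
    · exact Or.inl ⟨hx, hxu⟩
  exact ⟨⟨hC2, h2C⟩, ⟨fun h => h23 (hC2 h), fun h => h2C (h32 h)⟩,
    ⟨hC4, h4C⟩, fun h => ⟨hnp, hNS h⟩⟩
end

section
/- For every measurable A ⊆ X the following are equivalent: (i) A is a tail set, i.e. for every n ≥ 0 there is a measurable Aₙ ⊆ X with A =̇ T⁻ⁿAₙ; (ii) A =̇ T⁻ⁿ(T̂ⁿA) for every n ≥ 0; (iii) λ(T̂ⁿA ∩ T̂ⁿ(X \ A)) = 0 for every n ≥ 0. In this case, a sequence (Aₙ)_{n≥0} of measurable sets satisfies A =̇ T⁻ⁿAₙ for all n ≥ 0 if and only if T̂ⁿA ⊆̇ Aₙ ⊆̇ T̂ⁿA ∪ (X \ T̂ⁿX) for all n ≥ 0. -/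
open MeasureTheory Set

/-- Abstract setup: a null-preserving measurable map `S` together with an
essential-image operator `hat` satisfying the characterizing property. -/
structure ImgSetup {X : Type*} [MeasurableSpace X] (lam : Measure X)
    (S : X → X) (hat : Set X → Set X) : Prop where
  meas : Measurable S
  np : ∀ C : Set X, MeasurableSet C → lam C = 0 → lam (S ⁻¹' C) = 0
  hm : ∀ A : Set X, MeasurableSet A → MeasurableSet (hat A)
  char : ∀ A : Set X, MeasurableSet A → ∀ C : Set X, MeasurableSet C →
    (0 < lam (hat A ∩ C) ↔ 0 < lam (A ∩ S ⁻¹' C))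

namespace ImgSetup

variable {X : Type*} [MeasurableSpace X] {lam : Measure X}
  {S : X → X} {hat : Set X → Set X} (h : ImgSetup lam S hat)

include h

lemma char0 {A C : Set X} (hA : MeasurableSet A) (hC : MeasurableSet C) :
    lam (hat A ∩ C) = 0 ↔ lam (A ∩ S ⁻¹' C) = 0 := by
  have hh := h.char A hA C hC
  simp only [pos_iff_ne_zero, ne_eq] at hh
  exact not_iff_not.mp hh

lemma subset_pre {A : Set X} (hA : MeasurableSet A) :
    lam (A \ S ⁻¹' hat A) = 0 := by
  have h0 : lam (hat A ∩ (hat A)ᶜ) = 0 := by simp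
  have := (h.char0 hA (h.hm A hA).compl).mp h0
  simpa [Set.preimage_compl, Set.diff_eq] using this

lemma mono {A B : Set X} (hA : MeasurableSet A) (hB : MeasurableSet B)
    (hAB : lam (A \ B) = 0) : lam (hat A \ hat B) = 0 := by
  have hBn := h.subset_pre hB
  have key : lam (A ∩ S ⁻¹' (hat B)ᶜ) = 0 := by
    refine measure_mono_null (fun x hx => ?_) (measure_union_null hAB hBn)
    rcases hx with ⟨hxA, hxC⟩
    by_cases hxB : x ∈ B
    · exact Or.inr ⟨hxB, hxC⟩
    · exact Or.inl ⟨hxA, hxB⟩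
  have := (h.char0 hA (h.hm B hB).compl).mpr key
  simpa [Set.preimage_compl, Set.diff_eq] using this

lemma hat_pre {C : Set X} (hC : MeasurableSet C) :
    lam (hat (S ⁻¹' C) \ C) = 0 := by
  have key : lam (S ⁻¹' C ∩ S ⁻¹' Cᶜ) = 0 := by
    rw [Set.preimage_compl, Set.inter_compl_self, measure_empty]
  have := (h.char0 (hC.preimage h.meas) hC.compl).mpr key
  simpa [Set.diff_eq] using this

lemma pre_univ : lam (S ⁻¹' (hat Set.univ)ᶜ) = 0 := by
  have h0 : lam (hat (Set.univ : Set X) ∩ (hat Set.univ)ᶜ) = 0 := by simp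
  have := (h.char0 MeasurableSet.univ (h.hm _ MeasurableSet.univ).compl).mp h0
  simpa using this

/-- (i) ⇒ (ii), single step. -/
lemma ii_of_i {A B : Set X} (hA : MeasurableSet A) (hB : MeasurableSet B)
    (h1 : lam (A \ S ⁻¹' B) = 0) (h2 : lam (S ⁻¹' B \ A) = 0) :
    lam (A \ S ⁻¹' hat A) = 0 ∧ lam (S ⁻¹' hat A \ A) = 0 := by
  refine ⟨h.subset_pre hA, ?_⟩
  have e1 : lam (hat A \ hat (S ⁻¹' B)) = 0 := h.mono hA (hB.preimage h.meas) h1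
  have e2 : lam (hat (S ⁻¹' B) \ B) = 0 := h.hat_pre hB
  have e3 : lam (hat A \ B) = 0 := by
    refine measure_mono_null (fun x hx => ?_) (measure_union_null e1 e2)
    rcases hx with ⟨hx1, hx2⟩
    by_cases hxm : x ∈ hat (S ⁻¹' B)
    · exact Or.inr ⟨hxm, hx2⟩
    · exact Or.inl ⟨hx1, hxm⟩
  have e4 : lam (S ⁻¹' (hat A \ B)) = 0 := h.np _ ((h.hm A hA).diff hB) e3
  rw [Set.preimage_diff] at e4
  refine measure_mono_null (fun x hx => ?_) (measure_union_null e4 h2)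
  rcases hx with ⟨hx1, hx2⟩
  by_cases hxB : x ∈ S ⁻¹' B
  · exact Or.inr ⟨hxB, hx2⟩
  · exact Or.inl ⟨hx1, hxB⟩

/-- (ii) ⇒ (iii), single step. -/
lemma iii_of_ii {A : Set X} (hA : MeasurableSet A)
    (h2 : lam (S ⁻¹' hat A \ A) = 0) :
    lam (hat A ∩ hat Aᶜ) = 0 := by
  have hc : lam (Aᶜ \ S ⁻¹' (hat A)ᶜ) = 0 := by
    have heq : Aᶜ \ S ⁻¹' (hat A)ᶜ = S ⁻¹' hat A \ A := by
      ext x; simp [Set.mem_diff, and_comm]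
    rw [heq]; exact h2
  have e1 : lam (hat Aᶜ \ hat (S ⁻¹' (hat A)ᶜ)) = 0 :=
    h.mono hA.compl ((h.hm A hA).compl.preimage h.meas) hc
  have e2 : lam (hat (S ⁻¹' (hat A)ᶜ) \ (hat A)ᶜ) = 0 :=
    h.hat_pre (h.hm A hA).compl
  have e3 : lam (hat Aᶜ \ (hat A)ᶜ) = 0 := by
    refine measure_mono_null (fun x hx => ?_) (measure_union_null e1 e2)
    rcases hx with ⟨hx1, hx2⟩
    by_cases hxm : x ∈ hat (S ⁻¹' (hat A)ᶜ)
    · exact Or.inr ⟨hxm, hx2⟩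
    · exact Or.inl ⟨hx1, hxm⟩
  refine measure_mono_null (fun x hx => ?_) e3
  exact ⟨hx.2, by simpa using hx.1⟩

/-- (iii) ⇒ (ii), single step. -/
lemma ii_of_iii {A : Set X} (hA : MeasurableSet A)
    (h3 : lam (hat A ∩ hat Aᶜ) = 0) :
    lam (A \ S ⁻¹' hat A) = 0 ∧ lam (S ⁻¹' hat A \ A) = 0 := by
  refine ⟨h.subset_pre hA, ?_⟩
  have e1 : lam (Aᶜ \ S ⁻¹' hat Aᶜ) = 0 := h.subset_pre hA.compl
  have e2 : lam (S ⁻¹' (hat A ∩ hat Aᶜ)) = 0 :=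
    h.np _ ((h.hm A hA).inter (h.hm _ hA.compl)) h3
  refine measure_mono_null (fun x hx => ?_) (measure_union_null e1 e2)
  rcases hx with ⟨hx1, hx2⟩
  by_cases hxc : x ∈ S ⁻¹' hat Aᶜ
  · exact Or.inr ⟨hx1, hxc⟩
  · exact Or.inl ⟨hx2, hxc⟩

/-- Corridor characterization, single step, assuming (ii). -/
lemma corridor {A An : Set X} (hA : MeasurableSet A) (hAn : MeasurableSet An)
    (hii1 : lam (A \ S ⁻¹' hat A) = 0) (hii2 : lam (S ⁻¹' hat A \ A) = 0) :
    (lam (A \ S ⁻¹' An) = 0 ∧ lam (S ⁻¹' An \ A) = 0) ↔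
      (lam (hat A \ An) = 0 ∧ lam (An \ (hat A ∪ (hat Set.univ)ᶜ)) = 0) := by
  constructor
  · rintro ⟨h1, h2⟩
    constructor
    · have e1 : lam (hat A \ hat (S ⁻¹' An)) = 0 := h.mono hA (hAn.preimage h.meas) h1
      have e2 : lam (hat (S ⁻¹' An) \ An) = 0 := h.hat_pre hAn
      refine measure_mono_null (fun x hx => ?_) (measure_union_null e1 e2)
      rcases hx with ⟨hx1, hx2⟩
      by_cases hxm : x ∈ hat (S ⁻¹' An)
      · exact Or.inr ⟨hxm, hx2⟩
      · exact Or.inl ⟨hx1, hxm⟩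
    · have hD : MeasurableSet (An ∩ (hat A)ᶜ) := hAn.inter (h.hm A hA).compl
      have key : lam ((Set.univ : Set X) ∩ S ⁻¹' (An ∩ (hat A)ᶜ)) = 0 := by
        rw [Set.univ_inter]
        have : S ⁻¹' (An ∩ (hat A)ᶜ) ⊆ (S ⁻¹' An \ A) ∪ (A \ S ⁻¹' hat A) := by
          intro x hx
          rcases hx with ⟨hx1, hx2⟩
          by_cases hxA : x ∈ A
          · exact Or.inr ⟨hxA, hx2⟩
          · exact Or.inl ⟨hx1, hxA⟩
        exact measure_mono_null this (measure_union_null h2 hii1)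
      have e := (h.char0 MeasurableSet.univ hD).mpr key
      refine measure_mono_null (fun x hx => ?_) e
      rcases hx with ⟨hx1, hx2⟩
      rw [Set.mem_union, not_or, Set.notMem_compl_iff] at hx2
      exact ⟨hx2.2, hx1, hx2.1⟩
  · rintro ⟨h1, h2⟩
    have e1 : lam (S ⁻¹' (hat A \ An)) = 0 :=
      h.np _ ((h.hm A hA).diff hAn) h1
    have e2 : lam (S ⁻¹' (An \ (hat A ∪ (hat Set.univ)ᶜ))) = 0 :=
      h.np _ (hAn.diff ((h.hm A hA).union (h.hm _ MeasurableSet.univ).compl)) h2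
    have e3 : lam (S ⁻¹' (hat Set.univ)ᶜ) = 0 := h.pre_univ
    constructor
    · refine measure_mono_null (fun x hx => ?_) (measure_union_null hii1 e1)
      rcases hx with ⟨hx1, hx2⟩
      by_cases hxm : x ∈ S ⁻¹' hat A
      · exact Or.inr ⟨hxm, hx2⟩
      · exact Or.inl ⟨hx1, hxm⟩
    · refine measure_mono_null (fun x hx => ?_)
        (measure_union_null (measure_union_null e2 e3) hii2)
      rcases hx with ⟨hx1, hx2⟩
      by_cases hc : S x ∈ hat A ∪ (hat Set.univ)ᶜ
      · rcases hc with hc | hc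
        · exact Or.inr ⟨hc, hx2⟩
        · exact Or.inl (Or.inr hc)
      · exact Or.inl (Or.inl ⟨hx1, hc⟩)

/-- Composition of two setups. -/
lemma comp {S' : X → X} {hat' : Set X → Set X} (h' : ImgSetup lam S' hat') :
    ImgSetup lam (S ∘ S') (hat ∘ hat') := by
  constructor
  · exact h.meas.comp h'.meas
  · intro C hC hC0
    rw [Set.preimage_comp]
    exact h'.np _ (hC.preimage h.meas) (h.np _ hC hC0)
  · intro A hA
    exact h.hm _ (h'.hm A hA)
  · intro A hA C hC
    rw [Function.comp_apply, Set.preimage_comp, ← Set.preimage_comp]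
    calc (0 < lam (hat (hat' A) ∩ C)) ↔ 0 < lam (hat' A ∩ S ⁻¹' C) :=
          h.char _ (h'.hm A hA) C hC
      _ ↔ 0 < lam (A ∩ S' ⁻¹' (S ⁻¹' C)) := h'.char A hA _ (hC.preimage h.meas)
      _ ↔ _ := by rw [Set.preimage_comp]

omit h in
lemma id_setup : ImgSetup lam (id : X → X) (id : Set X → Set X) := by
  constructor
  · exact measurable_id
  · intro C _ hC0; simpa using hC0
  · intro A hA; exact hA
  · intro A _ C _; simp

lemma iterate (n : ℕ) : ImgSetup lam (S^[n]) (hat^[n]) := by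
  induction n with
  | zero => simpa using (id_setup (lam := lam) (X := X))
  | succ n ih =>
    rw [Function.iterate_succ, Function.iterate_succ]
    exact ih.comp h

end ImgSetup

lemma symmDiff_null_iff {X : Type*} [MeasurableSpace X] (lam : Measure X)
    (A B : Set X) : lam (symmDiff A B) = 0 ↔ lam (A \ B) = 0 ∧ lam (B \ A) = 0 := by
  rw [Set.symmDiff_def, measure_union_null_iff]

/-- For measurable `A` the following are equivalent: (i) `A` is a tail set
(`A =̇ T⁻ⁿAₙ` for suitable measurable `Aₙ`); (ii) `A =̇ T⁻ⁿ(T̂ⁿA)` for all `n`;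
(iii) `λ(T̂ⁿA ∩ T̂ⁿ(Aᶜ)) = 0` for all `n`. In this case a sequence `(Aₙ)` of measurable
sets is a corridor for `A` iff `T̂ⁿA ⊆̇ Aₙ ⊆̇ T̂ⁿA ∪ (T̂ⁿX)ᶜ` for all `n`. -/
theorem stmt_16 {X : Type*} [MeasurableSpace X]
    (lam : Measure X) [SigmaFinite lam]
    (T : X → X) (hT : Measurable T) (hnp : lam.map T ≪ lam)
    (hatT : Set X → Set X)
    (hm : ∀ A : Set X, MeasurableSet A → MeasurableSet (hatT A))
    (hchar : ∀ A : Set X, MeasurableSet A → ∀ C : Set X, MeasurableSet C →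
      (0 < lam (hatT A ∩ C) ↔ 0 < lam (A ∩ T ⁻¹' C)))
    (A : Set X) (hA : MeasurableSet A) :
    ((∀ n : ℕ, ∃ An : Set X, MeasurableSet An ∧
        lam (symmDiff A (T^[n] ⁻¹' An)) = 0) ↔
      (∀ n : ℕ, lam (symmDiff A (T^[n] ⁻¹' (hatT^[n] A))) = 0)) ∧
    ((∀ n : ℕ, ∃ An : Set X, MeasurableSet An ∧
        lam (symmDiff A (T^[n] ⁻¹' An)) = 0) ↔
      (∀ n : ℕ, lam (hatT^[n] A ∩ hatT^[n] Aᶜ) = 0)) ∧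
    ((∀ n : ℕ, ∃ An : Set X, MeasurableSet An ∧
        lam (symmDiff A (T^[n] ⁻¹' An)) = 0) →
      ∀ An : ℕ → Set X, (∀ n, MeasurableSet (An n)) →
        ((∀ n : ℕ, lam (symmDiff A (T^[n] ⁻¹' (An n))) = 0) ↔
          (∀ n : ℕ, lam (hatT^[n] A \ An n) = 0 ∧
            lam (An n \ (hatT^[n] A ∪ (hatT^[n] Set.univ)ᶜ)) = 0))) := by
  have hbase : ImgSetup lam T hatT := by
    refine ⟨hT, ?_, hm, hchar⟩
    intro C hC hC0
    have : lam.map T C = 0 := hnp hC0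
    rwa [Measure.map_apply hT hC] at this
  have hiter : ∀ n, ImgSetup lam (T^[n]) (hatT^[n]) := hbase.iterate
  -- (i) ⇒ (ii) pointwise
  have i_to_ii : (∀ n : ℕ, ∃ An : Set X, MeasurableSet An ∧
      lam (symmDiff A (T^[n] ⁻¹' An)) = 0) →
      ∀ n : ℕ, lam (symmDiff A (T^[n] ⁻¹' (hatT^[n] A))) = 0 := by
    intro hi n
    obtain ⟨B, hB, hB0⟩ := hi n
    rw [symmDiff_null_iff] at hB0 ⊢
    exact (hiter n).ii_of_i hA hB hB0.1 hB0.2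
  constructor
  · constructor
    · exact i_to_ii
    · intro hii n
      exact ⟨hatT^[n] A, (hiter n).hm A hA, hii n⟩
  constructor
  · constructor
    · intro hi n
      have := i_to_ii hi n
      rw [symmDiff_null_iff] at this
      exact (hiter n).iii_of_ii hA this.2
    · intro hiii n
      refine ⟨hatT^[n] A, (hiter n).hm A hA, ?_⟩
      rw [symmDiff_null_iff]
      exact (hiter n).ii_of_iii hA (hiii n)
  · intro hi An hAn
    have hii := i_to_ii hi
    constructor
    · intro hAn0 n
      have h2 := hii n
      rw [symmDiff_null_iff] at h2
      have h1 := hAn0 n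
      rw [symmDiff_null_iff] at h1
      exact ((hiter n).corridor hA (hAn n) h2.1 h2.2).mp h1
    · intro hc n
      have h2 := hii n
      rw [symmDiff_null_iff] at h2
      rw [symmDiff_null_iff]
      exact ((hiter n).corridor hA (hAn n) h2.1 h2.2).mpr (hc n)
end

section
/- The following are equivalent: (i) T is exact, i.e. every tail set A satisfies λ(A) = 0 or λ(X \ A) = 0; (ii) T has no nontrivial corridors, i.e. whenever (Aₙ)_{n≥0} is a sequence of measurable sets with A₀ =̇ T⁻ⁿAₙ for all n ≥ 0, then λ(A₀) = 0 or λ(X \ A₀) = 0; (iii) no two sets of positive measure remain separated, i.e. whenever measurable A, B remain separated, then λ(A) = 0 or λ(B) = 0. -/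
open MeasureTheory Set

/-- `A` is a tail set for `T`: for every `n` there is a measurable `Aₙ` with `A =̇ T⁻ⁿAₙ`. -/
def IsTailSet {X : Type*} [MeasurableSpace X] (lam : MeasureTheory.Measure X)
    (T : X → X) (A : Set X) : Prop :=
  ∀ n : ℕ, ∃ An : Set X, MeasurableSet An ∧ lam (symmDiff A (T^[n] ⁻¹' An)) = 0

/-- `A` and `B` remain separated under `T`: for every `n` there is a measurable `Aₙ` with
`A ⊆̇ T⁻ⁿAₙ` and `B ⊆̇ (T⁻ⁿAₙ)ᶜ`. -/
def RemainSeparated {X : Type*} [MeasurableSpace X] (lam : MeasureTheory.Measure X)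
    (T : X → X) (A B : Set X) : Prop :=
  ∀ n : ℕ, ∃ An : Set X, MeasurableSet An ∧
    lam (A \ T^[n] ⁻¹' An) = 0 ∧ lam (B \ (T^[n] ⁻¹' An)ᶜ) = 0

/-- The following are equivalent: (i) `T` is exact (every tail set is
trivial); (ii) `T` has no nontrivial corridors; (iii) no two sets of positive measure
remain separated. -/
theorem stmt_18 {X : Type*} [MeasurableSpace X]
    (lam : Measure X) [SigmaFinite lam]
    (T : X → X) (hT : Measurable T) (hnp : lam.map T ≪ lam) :
    ((∀ A : Set X, MeasurableSet A → IsTailSet lam T A →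
        lam A = 0 ∨ lam Aᶜ = 0) ↔
      (∀ An : ℕ → Set X, (∀ n, MeasurableSet (An n)) →
        (∀ n : ℕ, lam (symmDiff (An 0) (T^[n] ⁻¹' (An n))) = 0) →
        lam (An 0) = 0 ∨ lam (An 0)ᶜ = 0)) ∧
    ((∀ A : Set X, MeasurableSet A → IsTailSet lam T A →
        lam A = 0 ∨ lam Aᶜ = 0) ↔
      (∀ A B : Set X, MeasurableSet A → MeasurableSet B →
        RemainSeparated lam T A B → lam A = 0 ∨ lam B = 0)) := by
  constructor
  · constructor
    · intro h An hm hsd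
      exact h (An 0) (hm 0) (fun n => ⟨An n, hm n, hsd n⟩)
    · intro h A hA htail
      choose f hm hsd using htail
      have := h (fun n => Nat.rec A (fun k _ => f (k+1)) n) ?_ ?_
      · exact this
      · intro n
        cases n with
        | zero => exact hA
        | succ k => exact hm (k+1)
      · intro n
        cases n with
        | zero => simp
        | succ k => exact hsd (k+1)
  · constructor
    · -- (i) → (iii)
      intro h A B hA hB hsep
      choose f hm h1 h2 using hsep
      set E : Set X := ⋂ N, ⋃ j, T^[N+j] ⁻¹' f (N+j) with hE
      have hEmeas : MeasurableSet E :=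
        MeasurableSet.iInter fun N => MeasurableSet.iUnion fun j =>
          (hm (N+j)).preimage (hT.iterate (N+j))
      have htail : IsTailSet lam T E := by
        intro m
        refine ⟨⋂ N, ⋃ j, T^[N+j] ⁻¹' f (m+(N+j)), ?_, ?_⟩
        · exact MeasurableSet.iInter fun N => MeasurableSet.iUnion fun j =>
            (hm _).preimage (hT.iterate _)
        · have hEq : E = T^[m] ⁻¹' (⋂ N, ⋃ j, T^[N+j] ⁻¹' f (m+(N+j))) := by
            ext x
            simp only [hE, mem_iInter, mem_iUnion, mem_preimage,
              ← Function.iterate_add_apply]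
            constructor
            · intro hx N
              obtain ⟨j, hj⟩ := hx (m+N)
              refine ⟨j, ?_⟩
              rw [show (N+j)+m = (m+N)+j from by omega,
                show m+(N+j) = (m+N)+j from by omega]
              exact hj
            · intro hx N
              obtain ⟨j, hj⟩ := hx N
              refine ⟨j+m, ?_⟩
              rw [show (N+j)+m = N+(j+m) from by omega] at hj
              rw [show m+(N+j) = N+(j+m) from by omega] at hj
              exact hj
          rw [← hEq, symmDiff_self]
          simp
      have hAE : lam (A \ E) = 0 := by
        have hsub : A \ E ⊆ ⋃ N, A \ T^[N] ⁻¹' f N := by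
          intro x hx
          simp only [hE, mem_diff, mem_iInter, not_forall, mem_iUnion] at hx ⊢
          obtain ⟨hxA, N, hN⟩ := hx
          refine ⟨N, hxA, fun hmem => hN ⟨0, by simpa using hmem⟩⟩
        exact measure_mono_null hsub (measure_iUnion_null fun N => h1 N)
      have hBE : lam (B ∩ E) = 0 := by
        have hsub : B ∩ E ⊆ ⋃ j, B ∩ T^[j] ⁻¹' f j := by
          intro x hx
          obtain ⟨hxB, hxE⟩ := hx
          have := mem_iInter.mp hxE 0
          obtain ⟨j, hj⟩ := mem_iUnion.mp this
          simp only [Nat.zero_add] at hj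
          exact mem_iUnion.mpr ⟨j, hxB, hj⟩
        refine measure_mono_null hsub (measure_iUnion_null fun j => ?_)
        have := h2 j
        rwa [diff_compl] at this
      rcases h E hEmeas htail with hc | hc
      · left
        refine measure_mono_null (subset_diff_union A E) ?_
        exact measure_union_null hAE hc
      · right
        have hsub : B ⊆ (B ∩ E) ∪ Eᶜ := by
          intro x hx
          by_cases hxE : x ∈ E
          · exact Or.inl ⟨hx, hxE⟩
          · exact Or.inr hxE
        exact measure_mono_null hsub (measure_union_null hBE hc)
    · -- (iii) → (i)
      intro h A hA htail
      refine h A Aᶜ hA hA.compl fun n => ?_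
      obtain ⟨An, hAn, hsd⟩ := htail n
      refine ⟨An, hAn, ?_, ?_⟩
      · refine measure_mono_null ?_ hsd
        intro x hx
        exact Or.inl hx
      · refine measure_mono_null ?_ hsd
        intro x hx
        simp only [mem_diff, mem_compl_iff, not_not] at hx
        exact Or.inr ⟨hx.2, hx.1⟩
end
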